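/- arXiv:2110.02655 — 7 statements merged into one kernel-verified Lean document; each statement's English description precedes it below -/
import Mathlib

section
/- Let n ≥ 1, r ≥ 0, let h̃ : ℝⁿ → ℝ be measurable and bounded on bounded sets, and let C ⊆ (−∞,0] × ℝⁿ be a Borel set. Let c ∈ ℝⁿ with ‖c‖ > √(2r). Assume: (i) for every t ≤ 0 and x ∈ ℝⁿ with (t,x) ∉ C, the integral ∫_t^0 ∫_{C_s} e^{−rs} h̃(y) p((t,x),(s,y)) dy ds converges absolutely and equals 0; (ii) the set {(t, −tc) : t ≤ 0} ∩ C is bounded; (iii) the set {(s,y) ∈ C : ‖cs + y‖ < √(n·(−s))} is bounded; (iv) ∫_C e^{c·y + (‖c‖²/2 − r)s} |h̃(y)| d(s,y) < ∞. Then ∫_{−∞}^0 ∫_{C_s} e^{c·y + (‖c‖²/2 − r)s} h̃(y) dy ds = 0. -/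
open MeasureTheory Bornology
open scoped RealInnerProductSpace

/-- Transition density of `n`-dimensional standard Brownian motion. -/
noncomputable def transKernel (n : ℕ) (t : ℝ) (x : EuclideanSpace ℝ (Fin n))
    (s : ℝ) (y : EuclideanSpace ℝ (Fin n)) : ℝ :=
  (2 * Real.pi * (s - t)) ^ (-(n : ℝ) / 2) * Real.exp (-‖y - x‖ ^ 2 / (2 * (s - t)))

open Filter

private lemma transKernel_self (n : ℕ) (hn : 1 ≤ n) (t : ℝ)
    (x y : EuclideanSpace ℝ (Fin n)) : transKernel n t x t y = 0 := by
  have hne : -(n:ℝ)/2 ≠ 0 := by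
    have : (0:ℝ) < n := by exact_mod_cast hn
    intro h
    nlinarith [h]
  simp only [transKernel, sub_self, mul_zero, Real.zero_rpow hne, zero_mul]

private lemma key_identity (n : ℕ) (c y : EuclideanSpace ℝ (Fin n)) (r t s : ℝ)
    (hts : t < s) (ht : t < 0) :
    (2 * Real.pi * (-t)) ^ ((n : ℝ) / 2) * Real.exp (-(‖c‖ ^ 2 / 2) * t) *
      (Real.exp (-r * s) *
        ((2 * Real.pi * (s - t)) ^ (-(n : ℝ) / 2) *
          Real.exp (-‖y - (-t) • c‖ ^ 2 / (2 * (s - t))))) =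
    Real.exp (⟪c, y⟫ + (‖c‖ ^ 2 / 2 - r) * s) *
      (((-t) / (s - t)) ^ ((n : ℝ) / 2) *
        Real.exp (-‖y + s • c‖ ^ 2 / (2 * (s - t)))) := by
  have hu : (0:ℝ) < s - t := sub_pos.2 hts
  have hnt : (0:ℝ) < -t := neg_pos.2 ht
  have h2pi : (0:ℝ) ≤ 2 * Real.pi := by positivity
  have hyt : ‖y - (-t) • c‖ ^ 2
      = ‖y + s • c‖ ^ 2 - 2 * (s - t) * (⟪c, y⟫ + s * ‖c‖ ^ 2) + (s - t) ^ 2 * ‖c‖ ^ 2 := by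
    have h1 : y - (-t) • c = (y + s • c) - (s - t) • c := by module
    rw [h1, norm_sub_sq_real]
    have h2 : ⟪y + s • c, (s - t) • c⟫ = (s - t) * (⟪c, y⟫ + s * ‖c‖ ^ 2) := by
      rw [real_inner_smul_right, inner_add_left, real_inner_smul_left,
        real_inner_comm y c, real_inner_self_eq_norm_sq]
    have h3 : ‖(s - t) • c‖ ^ 2 = (s - t) ^ 2 * ‖c‖ ^ 2 := by
      rw [norm_smul, Real.norm_eq_abs, mul_pow, sq_abs]
    rw [h2, h3]
    ring
  have hpow : (2 * Real.pi * (-t)) ^ ((n : ℝ) / 2) * (2 * Real.pi * (s - t)) ^ (-(n : ℝ) / 2)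
      = ((-t) / (s - t)) ^ ((n : ℝ) / 2) := by
    rw [show -(n:ℝ)/2 = -((n:ℝ)/2) by ring, Real.rpow_neg (by positivity),
      Real.mul_rpow h2pi hnt.le, Real.mul_rpow h2pi hu.le, Real.div_rpow hnt.le hu.le]
    have h1 : (0:ℝ) < (2 * Real.pi) ^ ((n:ℝ)/2) := Real.rpow_pos_of_pos (by positivity) _
    have h2 : (0:ℝ) < (s - t) ^ ((n:ℝ)/2) := Real.rpow_pos_of_pos hu _
    field_simp
  have hexp : Real.exp (-(‖c‖ ^ 2 / 2) * t) *
      (Real.exp (-r * s) * Real.exp (-‖y - (-t) • c‖ ^ 2 / (2 * (s - t))))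
      = Real.exp (⟪c, y⟫ + (‖c‖ ^ 2 / 2 - r) * s) * Real.exp (-‖y + s • c‖ ^ 2 / (2 * (s - t))) := by
    rw [← Real.exp_add, ← Real.exp_add, ← Real.exp_add]
    congr 1
    rw [hyt]
    field_simp
    ring
  calc (2 * Real.pi * (-t)) ^ ((n : ℝ) / 2) * Real.exp (-(‖c‖ ^ 2 / 2) * t) *
      (Real.exp (-r * s) *
        ((2 * Real.pi * (s - t)) ^ (-(n : ℝ) / 2) *
          Real.exp (-‖y - (-t) • c‖ ^ 2 / (2 * (s - t)))))
      = ((2 * Real.pi * (-t)) ^ ((n : ℝ) / 2) * (2 * Real.pi * (s - t)) ^ (-(n : ℝ) / 2)) *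
        (Real.exp (-(‖c‖ ^ 2 / 2) * t) *
          (Real.exp (-r * s) * Real.exp (-‖y - (-t) • c‖ ^ 2 / (2 * (s - t))))) := by ring
    _ = _ := by rw [hpow, hexp]; ring

private lemma kappa_le (n : ℕ) (S t s q : ℝ) (hS : 0 ≤ S) (ht : t ≤ -(2*S+1))
    (hts : t < s) (hq : 0 ≤ q) (hcase : q < n * (-s) → -s ≤ S) :
    ((-t) / (s - t)) ^ ((n:ℝ)/2) * Real.exp (-q / (2*(s - t))) ≤ 2 ^ ((n:ℝ)/2) := by
  have hu : (0:ℝ) < s - t := sub_pos.2 hts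
  have ha : (0:ℝ) ≤ (n:ℝ)/2 := by positivity
  have hbase : (-t) / (s - t) = 1 + (-s) / (s - t) := by field_simp; ring
  have hb0 : (0:ℝ) ≤ (-t)/(s-t) := div_nonneg (by linarith) hu.le
  by_cases hcs : q < n * (-s)
  · have hsS := hcase hcs
    have hu2 : S + 1 ≤ s - t := by linarith
    have h1 : (-t)/(s-t) ≤ 2 := by
      rw [hbase]
      have : (-s)/(s-t) ≤ 1 := by rw [div_le_one hu]; linarith
      linarith
    have h2 : ((-t)/(s-t)) ^ ((n:ℝ)/2) ≤ 2 ^ ((n:ℝ)/2) := Real.rpow_le_rpow hb0 h1 ha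
    have h3 : Real.exp (-q/(2*(s-t))) ≤ 1 := by
      rw [Real.exp_le_one_iff]
      apply div_nonpos_of_nonpos_of_nonneg <;> [linarith; positivity]
    calc ((-t)/(s-t)) ^ ((n:ℝ)/2) * Real.exp (-q/(2*(s-t)))
        ≤ 2 ^ ((n:ℝ)/2) * 1 := mul_le_mul h2 h3 (Real.exp_nonneg _) (by positivity)
      _ = 2 ^ ((n:ℝ)/2) := mul_one _
  · push_neg at hcs
    have h1 : (-t)/(s-t) ≤ Real.exp ((-s)/(s-t)) := by
      rw [hbase, add_comm]
      exact Real.add_one_le_exp _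
    have h2 : ((-t)/(s-t)) ^ ((n:ℝ)/2) ≤ Real.exp ((-s)/(s-t) * ((n:ℝ)/2)) := by
      calc ((-t)/(s-t)) ^ ((n:ℝ)/2) ≤ (Real.exp ((-s)/(s-t))) ^ ((n:ℝ)/2) :=
            Real.rpow_le_rpow hb0 h1 ha
        _ = Real.exp ((-s)/(s-t) * ((n:ℝ)/2)) := (Real.exp_mul _ _).symm
    have h3 : ((-t)/(s-t)) ^ ((n:ℝ)/2) * Real.exp (-q/(2*(s-t)))
        ≤ Real.exp ((-s)/(s-t) * ((n:ℝ)/2) + -q/(2*(s-t))) := by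
      rw [Real.exp_add]
      exact mul_le_mul_of_nonneg_right h2 (Real.exp_nonneg _)
    have h4 : (-s)/(s-t) * ((n:ℝ)/2) + -q/(2*(s-t)) ≤ 0 := by
      have heq : (-s)/(s-t) * ((n:ℝ)/2) + -q/(2*(s-t)) = ((n:ℝ)*(-s) - q)/(2*(s-t)) := by
        field_simp; ring
      rw [heq]
      exact div_nonpos_of_nonpos_of_nonneg (by linarith) (by positivity)
    calc ((-t)/(s-t)) ^ ((n:ℝ)/2) * Real.exp (-q/(2*(s-t)))
        ≤ Real.exp ((-s)/(s-t) * ((n:ℝ)/2) + -q/(2*(s-t))) := h3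
      _ ≤ 1 := Real.exp_le_one_iff.2 h4
      _ ≤ 2 ^ ((n:ℝ)/2) := Real.one_le_rpow one_le_two ha

private lemma kappa_tendsto (a q s t₀ : ℝ) :
    Tendsto (fun k : ℕ => ((-(t₀ - k)) / (s - (t₀ - k))) ^ a *
      Real.exp (-q / (2 * (s - (t₀ - k))))) atTop (nhds 1) := by
  have hu : Tendsto (fun k : ℕ => s - (t₀ - k)) atTop atTop := by
    have h1 : (fun k : ℕ => s - (t₀ - k)) = fun k : ℕ => (k : ℝ) + (s - t₀) := by
      funext k; ring
    rw [h1]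
    exact tendsto_atTop_add_const_right _ _ tendsto_natCast_atTop_atTop
  have hg : Tendsto (fun u : ℝ => ((u - s)/u) ^ a * Real.exp (-q/(2*u))) atTop (nhds 1) := by
    have hbase : Tendsto (fun u : ℝ => (u - s)/u) atTop (nhds 1) := by
      have heq : (fun u : ℝ => (u - s)/u) =ᶠ[atTop] fun u => 1 - s * u⁻¹ := by
        filter_upwards [eventually_ne_atTop 0] with u hu
        field_simp
      rw [tendsto_congr' heq]
      have := (tendsto_inv_atTop_zero (𝕜 := ℝ)).const_mul s
      simpa using tendsto_const_nhds.sub this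
    have h1 : Tendsto (fun u : ℝ => ((u - s)/u) ^ a) atTop (nhds 1) := by
      simpa using hbase.rpow_const (Or.inl one_ne_zero)
    have h2 : Tendsto (fun u : ℝ => Real.exp (-q/(2*u))) atTop (nhds 1) := by
      have h3 : Tendsto (fun u : ℝ => -q/(2*u)) atTop (nhds 0) := by
        have heq : (fun u : ℝ => -q/(2*u)) = fun u : ℝ => (-q/2) * u⁻¹ := by
          funext u; ring
        rw [heq]
        simpa using (tendsto_inv_atTop_zero (𝕜 := ℝ)).const_mul (-q/2)
      have h4 := (Real.continuous_exp.tendsto 0).comp h3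
      rw [Real.exp_zero] at h4
      exact h4
    simpa using h1.mul h2
  have hcomp := hg.comp hu
  refine hcomp.congr fun k => ?_
  simp only [Function.comp_apply]
  congr 2
  ring

theorem stmt0 (n : ℕ) (hn : 1 ≤ n) (r : ℝ) (hr : 0 ≤ r)
    (htil : EuclideanSpace ℝ (Fin n) → ℝ) (hmeas : Measurable htil)
    (hbdd : ∀ A : Set (EuclideanSpace ℝ (Fin n)), IsBounded A →
      ∃ M : ℝ, ∀ x ∈ A, |htil x| ≤ M)
    (C : Set (ℝ × EuclideanSpace ℝ (Fin n))) (hC : MeasurableSet C)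
    (hCsub : ∀ p ∈ C, p.1 ≤ 0)
    (c : EuclideanSpace ℝ (Fin n)) (hc : Real.sqrt (2 * r) < ‖c‖)
    -- (i) the Volterra-type representation: for `(t,x) ∉ C` the integral
    -- `∫_t^0 ∫_{C_s} e^{-rs} h̃(y) p((t,x),(s,y)) dy ds` converges absolutely and is `0`.
    (hVolterra : ∀ t ≤ (0 : ℝ), ∀ x : EuclideanSpace ℝ (Fin n), (t, x) ∉ C →
      IntegrableOn (fun p : ℝ × EuclideanSpace ℝ (Fin n) =>
          Real.exp (-r * p.1) * htil p.2 * transKernel n t x p.1 p.2)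
        (C ∩ {p | t ≤ p.1}) ∧
      (∫ p in C ∩ {p : ℝ × EuclideanSpace ℝ (Fin n) | t ≤ p.1},
          Real.exp (-r * p.1) * htil p.2 * transKernel n t x p.1 p.2) = 0)
    -- (ii) the ray `{(t, -t c) : t ≤ 0}` meets `C` in a bounded set
    (hray : IsBounded
      ({p : ℝ × EuclideanSpace ℝ (Fin n) | ∃ t ≤ (0 : ℝ), p = (t, (-t) • c)} ∩ C))
    -- (iii)
    (hA : IsBounded
      {p : ℝ × EuclideanSpace ℝ (Fin n) |
        p ∈ C ∧ ‖p.1 • c + p.2‖ < Real.sqrt (n * (-p.1))})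
    -- (iv)
    (hint : IntegrableOn (fun p : ℝ × EuclideanSpace ℝ (Fin n) =>
        Real.exp (⟪c, p.2⟫ + (‖c‖ ^ 2 / 2 - r) * p.1) * |htil p.2|) C) :
    (∫ p in C, Real.exp (⟪c, p.2⟫ + (‖c‖ ^ 2 / 2 - r) * p.1) * htil p.2) = 0 := by
  classical
  obtain ⟨B, hB⟩ := isBounded_iff_forall_norm_le.1 hray
  obtain ⟨S₀, hS₀⟩ := isBounded_iff_forall_norm_le.1 hA
  set S : ℝ := max S₀ 0 with hSdef
  have hS : 0 ≤ S := le_max_right _ _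
  set t₀ : ℝ := min (-(B+1)) (-(2*S+1)) with ht₀def
  set t : ℕ → ℝ := fun k => t₀ - k with htdef
  have htle : ∀ k, t k ≤ -(2*S+1) := by
    intro k
    have h1 : t₀ ≤ -(2*S+1) := min_le_right _ _
    have h2 : (0:ℝ) ≤ (k:ℝ) := Nat.cast_nonneg k
    simp only [htdef]
    linarith
  have htneg : ∀ k, t k < 0 := fun k => lt_of_le_of_lt (htle k) (by linarith)
  have ht0 : ∀ k, t k ≤ 0 := fun k => (htneg k).le
  have hnotC : ∀ k, (t k, (-(t k)) • c) ∉ C := by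
    intro k hmem
    have h1 : ((t k, (-(t k)) • c) : ℝ × EuclideanSpace ℝ (Fin n)) ∈
        ({p : ℝ × EuclideanSpace ℝ (Fin n) | ∃ u ≤ (0:ℝ), p = (u, (-u) • c)} ∩ C) :=
      ⟨⟨t k, ht0 k, rfl⟩, hmem⟩
    have h2 := hB _ h1
    have h3 : |t k| ≤ B := by
      calc |t k| = ‖((t k, (-(t k)) • c) : ℝ × EuclideanSpace ℝ (Fin n)).1‖ :=
            (Real.norm_eq_abs _).symm
        _ ≤ ‖((t k, (-(t k)) • c) : ℝ × EuclideanSpace ℝ (Fin n))‖ := norm_fst_le _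
        _ ≤ B := h2
    have h4 : t k ≤ -(B+1) := by
      have h5 : t₀ ≤ -(B+1) := min_le_left _ _
      have h6 : (0:ℝ) ≤ (k:ℝ) := Nat.cast_nonneg k
      simp only [htdef]
      linarith
    have h5 : -(t k) ≤ |t k| := neg_le_abs _
    linarith
  have hSb : ∀ p : ℝ × EuclideanSpace ℝ (Fin n), p ∈ C →
      ‖p.2 + p.1 • c‖ ^ 2 < n * (-p.1) → -p.1 ≤ S := by
    intro p hp hq
    have hmemA : p ∈ {p : ℝ × EuclideanSpace ℝ (Fin n) |
        p ∈ C ∧ ‖p.1 • c + p.2‖ < Real.sqrt (n * (-p.1))} := by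
      refine ⟨hp, ?_⟩
      rw [show p.1 • c + p.2 = p.2 + p.1 • c from add_comm _ _]
      exact (Real.lt_sqrt (norm_nonneg _)).2 hq
    have h2 := hS₀ _ hmemA
    have h3 : |p.1| ≤ S₀ := by
      calc |p.1| = ‖p.1‖ := (Real.norm_eq_abs _).symm
        _ ≤ ‖p‖ := norm_fst_le _
        _ ≤ S₀ := h2
    have h4 : -p.1 ≤ |p.1| := neg_le_abs _
    have h5 : S₀ ≤ S := le_max_left _ _
    linarith
  set ρ : ℕ → ℝ := fun k => (2 * Real.pi * (-(t k))) ^ ((n:ℝ)/2) *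
    Real.exp (-(‖c‖ ^ 2 / 2) * (t k)) with hρdef
  set g : ℕ → ℝ × EuclideanSpace ℝ (Fin n) → ℝ := fun k p =>
    Real.exp (-r * p.1) * htil p.2 * transKernel n (t k) ((-(t k)) • c) p.1 p.2 with hgdef
  set f : ℕ → ℝ × EuclideanSpace ℝ (Fin n) → ℝ := fun k p =>
    Set.indicator {q : ℝ × EuclideanSpace ℝ (Fin n) | t k ≤ q.1}
      (fun p => ρ k * g k p) p with hfdef
  set T : ℝ × EuclideanSpace ℝ (Fin n) → ℝ := fun p =>
    Real.exp (⟪c, p.2⟫ + (‖c‖ ^ 2 / 2 - r) * p.1) * htil p.2 with hTdef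
  set κ : ℕ → ℝ × EuclideanSpace ℝ (Fin n) → ℝ := fun k p =>
    ((-(t k)) / (p.1 - t k)) ^ ((n:ℝ)/2) *
      Real.exp (-‖p.2 + p.1 • c‖ ^ 2 / (2 * (p.1 - t k))) with hκdef
  have hfeq : ∀ k, ∀ p : ℝ × EuclideanSpace ℝ (Fin n), t k < p.1 →
      f k p = T p * κ k p := by
    intro k p hlt
    have hmem : p ∈ {q : ℝ × EuclideanSpace ℝ (Fin n) | t k ≤ q.1} := le_of_lt hlt
    have hkey := key_identity n c p.2 r (t k) p.1 hlt (htneg k)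
    simp only [hfdef, hgdef, hTdef, hκdef, Set.indicator_of_mem hmem, hρdef, transKernel]
    linear_combination (htil p.2) * hkey
  have hκle : ∀ k, ∀ p ∈ C, t k < p.1 → κ k p ≤ 2 ^ ((n:ℝ)/2) := by
    intro k p hp hlt
    simp only [hκdef]
    exact kappa_le n S (t k) p.1 (‖p.2 + p.1 • c‖ ^ 2) hS (htle k) hlt
      (by positivity) (hSb p hp)
  have hκnn : ∀ k, ∀ p : ℝ × EuclideanSpace ℝ (Fin n), t k < p.1 → 0 ≤ κ k p := by
    intro k p hlt
    have hu : (0:ℝ) < p.1 - t k := sub_pos.2 hlt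
    have hb : (0:ℝ) ≤ (-(t k)) / (p.1 - t k) := by
      apply div_nonneg _ hu.le
      have := htneg k
      linarith
    simp only [hκdef]
    have := Real.rpow_nonneg hb ((n:ℝ)/2)
    positivity
  have hmset : ∀ k, MeasurableSet {q : ℝ × EuclideanSpace ℝ (Fin n) | t k ≤ q.1} :=
    fun k => measurableSet_le measurable_const measurable_fst
  have hgm : ∀ k, Measurable (fun p : ℝ × EuclideanSpace ℝ (Fin n) => ρ k * g k p) := by
    intro k
    simp only [hgdef, transKernel]
    have m1 : Measurable fun p : ℝ × EuclideanSpace ℝ (Fin n) => Real.exp (-r * p.1) :=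
      (measurable_fst.const_mul (-r)).exp
    have m2 : Measurable fun p : ℝ × EuclideanSpace ℝ (Fin n) => htil p.2 :=
      hmeas.comp measurable_snd
    have m3 : Measurable fun p : ℝ × EuclideanSpace ℝ (Fin n) =>
        (2 * Real.pi * (p.1 - t k)) ^ (-(n : ℝ) / 2) :=
      ((measurable_fst.sub_const (t k)).const_mul (2 * Real.pi)).pow measurable_const
    have m4 : Measurable fun p : ℝ × EuclideanSpace ℝ (Fin n) =>
        Real.exp (-‖p.2 - (-(t k)) • c‖ ^ 2 / (2 * (p.1 - t k))) :=
      (Measurable.div (((measurable_snd.sub measurable_const).norm.pow_const 2).neg)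
        ((measurable_fst.sub_const (t k)).const_mul 2)).exp
    exact ((m1.mul m2).mul (m3.mul m4)).const_mul (ρ k)
  have hFm : ∀ k, AEStronglyMeasurable (f k) (volume.restrict C) := by
    intro k
    have : Measurable (f k) := (hgm k).indicator (hmset k)
    exact this.aestronglyMeasurable
  set bound : ℝ × EuclideanSpace ℝ (Fin n) → ℝ := fun p =>
    (2:ℝ) ^ ((n:ℝ)/2) * (Real.exp (⟪c, p.2⟫ + (‖c‖ ^ 2 / 2 - r) * p.1) * |htil p.2|)
    with hbounddef
  have hbint : Integrable bound (volume.restrict C) := hint.const_mul _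
  have hbnd : ∀ k, ∀ᵐ p ∂(volume.restrict C), ‖f k p‖ ≤ bound p := by
    intro k
    refine (ae_restrict_iff' hC).2 (ae_of_all _ ?_)
    intro p hp
    have hbpos : 0 ≤ bound p := by
      simp only [hbounddef]
      positivity
    rcases lt_trichotomy p.1 (t k) with hlt | heq | hgt
    · have hnm : p ∉ {q : ℝ × EuclideanSpace ℝ (Fin n) | t k ≤ q.1} := by
        simp only [Set.mem_setOf_eq, not_le]
        exact hlt
      have : f k p = 0 := by
        simp only [hfdef]
        exact Set.indicator_of_notMem hnm _
      rw [this]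
      simpa using hbpos
    · have hmem : p ∈ {q : ℝ × EuclideanSpace ℝ (Fin n) | t k ≤ q.1} := le_of_eq heq.symm
      have hker : transKernel n (t k) ((-(t k)) • c) p.1 p.2 = 0 := by
        rw [heq]
        exact transKernel_self n hn _ _ _
      have : f k p = 0 := by
        simp only [hfdef, hgdef, Set.indicator_of_mem hmem, hker, mul_zero, zero_mul]
      rw [this]
      simpa using hbpos
    · rw [hfeq k p hgt, Real.norm_eq_abs, abs_mul, abs_of_nonneg (hκnn k p hgt)]
      have hTabs : |T p| = Real.exp (⟪c, p.2⟫ + (‖c‖ ^ 2 / 2 - r) * p.1) * |htil p.2| := by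
        simp only [hTdef]
        rw [abs_mul, abs_of_nonneg (Real.exp_nonneg _)]
      rw [hTabs]
      simp only [hbounddef]
      calc Real.exp (⟪c, p.2⟫ + (‖c‖ ^ 2 / 2 - r) * p.1) * |htil p.2| * κ k p
          ≤ Real.exp (⟪c, p.2⟫ + (‖c‖ ^ 2 / 2 - r) * p.1) * |htil p.2| * (2 ^ ((n:ℝ)/2)) :=
            mul_le_mul_of_nonneg_left (hκle k p hp hgt) (by positivity)
        _ = (2:ℝ) ^ ((n:ℝ)/2) *
            (Real.exp (⟪c, p.2⟫ + (‖c‖ ^ 2 / 2 - r) * p.1) * |htil p.2|) := by ring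
  have hlim : ∀ᵐ p ∂(volume.restrict C),
      Tendsto (fun k => f k p) atTop (nhds (T p)) := by
    refine (ae_restrict_iff' hC).2 (ae_of_all _ ?_)
    intro p _hp
    have htb : Tendsto t atTop atBot := by
      have h1 : t = fun k : ℕ => t₀ + -(k:ℝ) := by
        funext k
        simp only [htdef]
        ring
      rw [h1]
      exact tendsto_atBot_add_const_left _ _
        (tendsto_neg_atBot_iff.2 tendsto_natCast_atTop_atTop)
    have hev : ∀ᶠ k in atTop, t k < p.1 := htb.eventually (eventually_lt_atBot p.1)
    have h1 : Tendsto (fun k => κ k p) atTop (nhds 1) := by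
      simp only [hκdef, htdef]
      exact kappa_tendsto ((n:ℝ)/2) (‖p.2 + p.1 • c‖ ^ 2) p.1 t₀
    have h2 : Tendsto (fun k => T p * κ k p) atTop (nhds (T p)) := by
      simpa using tendsto_const_nhds.mul h1
    refine Tendsto.congr' ?_ h2
    filter_upwards [hev] with k hk
    exact (hfeq k p hk).symm
  have hzero : ∀ k, (∫ p in C, f k p) = 0 := by
    intro k
    obtain ⟨_hInt, hI⟩ := hVolterra (t k) (ht0 k) ((-(t k)) • c) (hnotC k)
    calc (∫ p in C, f k p)
        = ∫ p in C ∩ {q : ℝ × EuclideanSpace ℝ (Fin n) | t k ≤ q.1}, ρ k * g k p := by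
          simp only [hfdef]
          exact setIntegral_indicator (hmset k)
      _ = ρ k * ∫ p in C ∩ {q : ℝ × EuclideanSpace ℝ (Fin n) | t k ≤ q.1}, g k p :=
          integral_const_mul _ _
      _ = 0 := by
          have hIg : (∫ p in C ∩ {q : ℝ × EuclideanSpace ℝ (Fin n) | t k ≤ q.1}, g k p)
              = 0 := by
            simp only [hgdef]
            exact hI
          rw [hIg, mul_zero]
  have hDCT := tendsto_integral_of_dominated_convergence bound hFm hbint hbnd hlim
  have hconst : Tendsto (fun _ : ℕ => (0:ℝ)) atTop (nhds (∫ p in C, T p)) :=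
    hDCT.congr hzero
  have hfin : (∫ p in C, T p) = 0 := tendsto_nhds_unique hconst tendsto_const_nhds
  exact hfin
end

section
/- Let n ≥ 1 and let g : (−∞,0] × ℝⁿ → ℝ be continuously differentiable in the time variable and twice continuously differentiable in the space variable, and set (Gg)(t,x) := ∂g/∂t(t,x) + (1/2)·Σ_{i=1}^n ∂²g/∂x_i²(t,x). Let C ⊆ (−∞,0] × ℝⁿ be a Borel set and c ∈ ℝⁿ. Assume: (i) for every t ≤ 0 and x ∈ ℝⁿ with (t,x) ∉ C, the integral ∫_t^0 ∫_{C_s} (−Gg)(s,y) p((t,x),(s,y)) dy ds converges absolutely and equals 0; (ii) there is ε > 0 such that the set {(t, −t(c+a)) : t ≤ 0, ‖a‖ < ε} ∩ C is bounded; (iii) the set {(s,y) ∈ C : ‖cs + y‖ < √(n·(−s))} is bounded and Gg is bounded on bounded sets; (iv) ∫_C e^{c·y + ‖c‖²s/2} |Gg(s,y)| d(s,y) < ∞. Then ∫_{−∞}^0 ∫_{C_s} e^{c·y + ‖c‖²s/2} (−Gg)(s,y) dy ds = 0. -/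
open MeasureTheory Bornology
open scoped RealInnerProductSpace

open Filter
open scoped Topology

lemma kernel_eq (n : ℕ) (c y : EuclideanSpace ℝ (Fin n)) {t s : ℝ} (hts : t < s) (ht0 : t < 0) :
    (2 * Real.pi * (-t)) ^ ((n:ℝ)/2) * Real.exp (-(‖c‖^2 * t) / 2) *
      transKernel n t ((-t) • c) s y
    = ((-t)/(s-t)) ^ ((n:ℝ)/2) * Real.exp (⟪c, y⟫ + ‖c‖^2 * s / 2) *
        Real.exp (-‖y + s • c‖^2 / (2*(s-t))) := by
  have hst : (0:ℝ) < s - t := by linarith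
  have h2p : (0:ℝ) < 2 * Real.pi * (s - t) := by positivity
  have hnt : (0:ℝ) < -t := by linarith
  have h2t : (0:ℝ) < 2 * Real.pi * (-t) := by positivity
  unfold transKernel
  have hpow : (2 * Real.pi * (-t)) ^ ((n:ℝ)/2) * (2 * Real.pi * (s - t)) ^ (-(n:ℝ)/2)
      = ((-t)/(s-t)) ^ ((n:ℝ)/2) := by
    rw [neg_div, Real.rpow_neg h2p.le, ← div_eq_mul_inv, ← Real.div_rpow h2t.le h2p.le]
    congr 1
    field_simp
  have hexp : Real.exp (-(‖c‖^2 * t) / 2) * Real.exp (-‖y - (-t) • c‖ ^ 2 / (2 * (s - t)))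
      = Real.exp (⟪c, y⟫ + ‖c‖^2 * s / 2) * Real.exp (-‖y + s • c‖^2 / (2*(s-t))) := by
    rw [← Real.exp_add, ← Real.exp_add]
    congr 1
    have e1 : ‖y - (-t) • c‖ ^ 2 = ‖y‖^2 + 2 * t * ⟪y, c⟫ + t^2 * ‖c‖^2 := by
      rw [sub_eq_add_neg, ← neg_smul, neg_neg, @norm_add_sq_real, real_inner_smul_right,
        norm_smul, Real.norm_eq_abs, mul_pow, sq_abs]
      ring
    have e2 : ‖y + s • c‖ ^ 2 = ‖y‖^2 + 2 * s * ⟪y, c⟫ + s^2 * ‖c‖^2 := by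
      rw [@norm_add_sq_real, real_inner_smul_right, norm_smul, Real.norm_eq_abs, mul_pow, sq_abs]
      ring
    rw [e1, e2, real_inner_comm c y]
    field_simp
    ring
  calc (2 * Real.pi * (-t)) ^ ((n:ℝ)/2) * Real.exp (-(‖c‖^2 * t) / 2) *
      ((2 * Real.pi * (s - t)) ^ (-(n : ℝ) / 2) * Real.exp (-‖y - (-t) • c‖ ^ 2 / (2 * (s - t))))
      = ((2 * Real.pi * (-t)) ^ ((n:ℝ)/2) * (2 * Real.pi * (s - t)) ^ (-(n:ℝ)/2)) *
        (Real.exp (-(‖c‖^2 * t) / 2) * Real.exp (-‖y - (-t) • c‖ ^ 2 / (2 * (s - t)))) := by ring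
    _ = _ := by rw [hpow, hexp]; ring

lemma ratio_le_one (n : ℕ) {t s r : ℝ} (hts : t < s) (hs : s ≤ 0) (hr : (n:ℝ) * (-s) ≤ r) :
    ((-t)/(s-t)) ^ ((n:ℝ)/2) * Real.exp (-r / (2*(s-t))) ≤ 1 := by
  have hst : (0:ℝ) < s - t := by linarith
  have hu : 0 ≤ (-s)/(s-t) := div_nonneg (by linarith) hst.le
  have h1 : (-t)/(s-t) = 1 + (-s)/(s-t) := by field_simp; ring
  have hexp : Real.exp (-r / (2*(s-t))) ≤ Real.exp (-((-s)/(s-t) * ((n:ℝ)/2))) := by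
    apply Real.exp_le_exp.mpr
    have e : -((-s)/(s-t) * ((n:ℝ)/2)) = -((n:ℝ) * (-s)) / (2*(s-t)) := by
      field_simp
    rw [e]
    gcongr
  have hpow : ((-t)/(s-t)) ^ ((n:ℝ)/2) ≤ Real.exp ((-s)/(s-t) * ((n:ℝ)/2)) := by
    rw [h1, Real.exp_mul]
    apply Real.rpow_le_rpow (by linarith) _ (by positivity)
    have := Real.add_one_le_exp ((-s)/(s-t))
    linarith
  calc ((-t)/(s-t)) ^ ((n:ℝ)/2) * Real.exp (-r / (2*(s-t)))
      ≤ Real.exp ((-s)/(s-t) * ((n:ℝ)/2)) * Real.exp (-((-s)/(s-t) * ((n:ℝ)/2))) :=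
        mul_le_mul hpow hexp (Real.exp_nonneg _) (Real.exp_nonneg _)
    _ = 1 := by rw [← Real.exp_add]; simp

lemma ratio_le_two (n : ℕ) {t s T : ℝ} (hts : t < s) (hs : s ≤ 0) (hT : -T ≤ s) (ht2 : t ≤ -(2*T))
    {r : ℝ} (hr : 0 ≤ r) :
    ((-t)/(s-t)) ^ ((n:ℝ)/2) * Real.exp (-r / (2*(s-t))) ≤ 2 ^ ((n:ℝ)/2) := by
  have hst : (0:ℝ) < s - t := by linarith
  have h2 : (-t)/(s-t) ≤ 2 := by rw [div_le_iff₀ hst]; linarith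
  have he : Real.exp (-r / (2*(s-t))) ≤ 1 :=
    Real.exp_le_one_iff.mpr (div_nonpos_of_nonpos_of_nonneg (by linarith) (by linarith))
  calc ((-t)/(s-t)) ^ ((n:ℝ)/2) * Real.exp (-r / (2*(s-t)))
      ≤ 2 ^ ((n:ℝ)/2) * 1 :=
        mul_le_mul (Real.rpow_le_rpow (div_nonneg (by linarith) hst.le) h2 (by positivity)) he
          (Real.exp_nonneg _) (by positivity)
    _ = 2 ^ ((n:ℝ)/2) := mul_one _

lemma st_atTop (s : ℝ) : Tendsto (fun t : ℝ => s - t) atBot atTop := by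
  have h : Tendsto (fun t : ℝ => -t) atBot atTop := tendsto_neg_atBot_atTop
  simpa [sub_eq_add_neg] using tendsto_atTop_add_const_left atBot s h

lemma ratio_tendsto (n : ℕ) (s r : ℝ) :
    Tendsto (fun t : ℝ => ((-t)/(s-t)) ^ ((n:ℝ)/2) * Real.exp (-r / (2*(s-t)))) atBot (𝓝 1) := by
  have hst := st_atTop s
  have h1 : Tendsto (fun t : ℝ => (-t)/(s-t)) atBot (𝓝 1) := by
    have h2 : Tendsto (fun t : ℝ => 1 + (-s)/(s-t)) atBot (𝓝 1) := by
      have := (tendsto_const_nhds (x := -s) (f := atBot (α := ℝ))).div_atTop hst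
      simpa using tendsto_const_nhds.add this
    apply h2.congr'
    filter_upwards [eventually_lt_atBot s] with t ht
    have : s - t ≠ 0 := by intro h; linarith
    field_simp
    ring
  have hpow : Tendsto (fun t : ℝ => ((-t)/(s-t)) ^ ((n:ℝ)/2)) atBot (𝓝 1) := by
    have hc : ContinuousAt (fun x : ℝ => x ^ ((n:ℝ)/2)) 1 :=
      Real.continuousAt_rpow_const 1 _ (Or.inl one_ne_zero)
    have := hc.tendsto.comp h1
    simpa [Function.comp_def] using this
  have hexp : Tendsto (fun t : ℝ => Real.exp (-r / (2*(s-t)))) atBot (𝓝 1) := by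
    have hd : Tendsto (fun t : ℝ => -r / (2*(s-t))) atBot (𝓝 0) :=
      tendsto_const_nhds.div_atTop (hst.const_mul_atTop two_pos)
    have := (Real.continuous_exp.continuousAt (x := 0)).tendsto.comp hd
    simpa [Function.comp_def] using this
  simpa using hpow.mul hexp

theorem stmt1 (n : ℕ) (hn : 1 ≤ n)
    (g gt : ℝ × EuclideanSpace ℝ (Fin n) → ℝ)
    (gx gxx : Fin n → ℝ × EuclideanSpace ℝ (Fin n) → ℝ)
    -- `g` is `C^{1,2}`: continuously differentiable in time ...
    (hgt : ∀ (t : ℝ) (x : EuclideanSpace ℝ (Fin n)),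
      HasDerivAt (fun τ : ℝ => g (τ, x)) (gt (t, x)) t)
    (hgtc : Continuous gt)
    -- ... and twice continuously differentiable in space
    (hgx : ∀ (i : Fin n) (t : ℝ) (x : EuclideanSpace ℝ (Fin n)),
      HasDerivAt (fun u : ℝ => g (t, x + u • EuclideanSpace.single i 1)) (gx i (t, x)) 0)
    (hgxc : ∀ i, Continuous (gx i))
    (hgxx : ∀ (i : Fin n) (t : ℝ) (x : EuclideanSpace ℝ (Fin n)),
      HasDerivAt (fun u : ℝ => gx i (t, x + u • EuclideanSpace.single i 1)) (gxx i (t, x)) 0)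
    (hgxxc : ∀ i, Continuous (gxx i))
    (C : Set (ℝ × EuclideanSpace ℝ (Fin n))) (hC : MeasurableSet C)
    (hCsub : ∀ p ∈ C, p.1 ≤ 0)
    (c : EuclideanSpace ℝ (Fin n))
    -- (i) the Volterra-type representation
    (hVolterra : ∀ t ≤ (0 : ℝ), ∀ x : EuclideanSpace ℝ (Fin n), (t, x) ∉ C →
      IntegrableOn (fun p : ℝ × EuclideanSpace ℝ (Fin n) =>
          (-(gt p + (1 / 2) * ∑ i : Fin n, gxx i p)) * transKernel n t x p.1 p.2)
        (C ∩ {p | t ≤ p.1}) ∧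
      (∫ p in C ∩ {p : ℝ × EuclideanSpace ℝ (Fin n) | t ≤ p.1},
          (-(gt p + (1 / 2) * ∑ i : Fin n, gxx i p)) * transKernel n t x p.1 p.2) = 0)
    -- (ii) a cone of rays around `c` meets `C` in a bounded set
    (hray : ∃ ε > (0 : ℝ), IsBounded
      ({p : ℝ × EuclideanSpace ℝ (Fin n) |
        ∃ t ≤ (0 : ℝ), ∃ a : EuclideanSpace ℝ (Fin n), ‖a‖ < ε ∧ p = (t, (-t) • (c + a))} ∩ C))
    -- (iii)
    (hA : IsBounded
      {p : ℝ × EuclideanSpace ℝ (Fin n) |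
        p ∈ C ∧ ‖p.1 • c + p.2‖ < Real.sqrt (n * (-p.1))})
    (hGbdd : ∀ A : Set (ℝ × EuclideanSpace ℝ (Fin n)), IsBounded A →
      ∃ M : ℝ, ∀ p ∈ A, |gt p + (1 / 2) * ∑ i : Fin n, gxx i p| ≤ M)
    -- (iv)
    (hint : IntegrableOn (fun p : ℝ × EuclideanSpace ℝ (Fin n) =>
        Real.exp (⟪c, p.2⟫ + ‖c‖ ^ 2 * p.1 / 2) *
          |gt p + (1 / 2) * ∑ i : Fin n, gxx i p|) C) :
    (∫ p in C, Real.exp (⟪c, p.2⟫ + ‖c‖ ^ 2 * p.1 / 2) *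
        (-(gt p + (1 / 2) * ∑ i : Fin n, gxx i p))) = 0 := by
  classical
  set Gg : ℝ × EuclideanSpace ℝ (Fin n) → ℝ :=
    fun p => -(gt p + (1 / 2) * ∑ i : Fin n, gxx i p) with hGg
  set Eex : ℝ × EuclideanSpace ℝ (Fin n) → ℝ :=
    fun p => Real.exp (⟪c, p.2⟫ + ‖c‖ ^ 2 * p.1 / 2) with hEex
  set F : ℝ → ℝ × EuclideanSpace ℝ (Fin n) → ℝ := fun t =>
    Set.indicator {q : ℝ × EuclideanSpace ℝ (Fin n) | t ≤ q.1}
      (fun p => (2 * Real.pi * (-t)) ^ ((n:ℝ)/2) * Real.exp (-(‖c‖^2 * t) / 2) *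
        transKernel n t ((-t) • c) p.1 p.2 * Gg p) with hF
  -- continuity of Gg
  have hGgc : Continuous Gg := by
    apply Continuous.neg
    exact hgtc.add (continuous_const.mul (continuous_finset_sum _ fun i _ => hgxxc i))
  -- T from hA
  obtain ⟨R, hR⟩ := (isBounded_iff_forall_norm_le).mp hA
  set T : ℝ := max R 0 with hTdef
  have hTnn : 0 ≤ T := le_max_right _ _
  have hTkey : ∀ p ∈ C, ‖p.1 • c + p.2‖ < Real.sqrt (n * (-p.1)) → -T ≤ p.1 := by
    intro p hp hlt
    have := hR p ⟨hp, hlt⟩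
    have h1 : ‖p.1‖ ≤ R := le_trans (norm_fst_le p) this
    have := abs_le.mp (by simpa [Real.norm_eq_abs] using h1)
    have : -R ≤ p.1 := this.1
    have : -T ≤ -R := neg_le_neg (le_max_left _ _)
    linarith [abs_le.mp (by simpa [Real.norm_eq_abs] using h1) |>.1]
  -- R' from hray
  obtain ⟨ε, hε, hrayB⟩ := hray
  obtain ⟨R', hR'⟩ := (isBounded_iff_forall_norm_le).mp hrayB
  have hnotC : ∀ t : ℝ, t < -(max R' 0) → ((t, (-t) • c) : ℝ × EuclideanSpace ℝ (Fin n)) ∉ C := by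
    intro t ht hmem
    have ht0 : t ≤ 0 := by
      have : (0:ℝ) ≤ max R' 0 := le_max_right _ _
      linarith
    have hmem2 : ((t, (-t) • c) : ℝ × EuclideanSpace ℝ (Fin n)) ∈
        ({p : ℝ × EuclideanSpace ℝ (Fin n) |
          ∃ t ≤ (0 : ℝ), ∃ a : EuclideanSpace ℝ (Fin n), ‖a‖ < ε ∧ p = (t, (-t) • (c + a))} ∩ C) := by
      refine ⟨⟨t, ht0, 0, by simpa using hε, by simp⟩, hmem⟩
    have := hR' _ hmem2
    have h1 : ‖t‖ ≤ R' := le_trans (norm_fst_le ((t, (-t) • c) : ℝ × EuclideanSpace ℝ (Fin n))) this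
    rw [Real.norm_eq_abs, abs_of_nonpos ht0] at h1
    have : R' ≤ max R' 0 := le_max_left _ _
    linarith
  -- measurability of the time-slab
  have hslab : ∀ t : ℝ, MeasurableSet {q : ℝ × EuclideanSpace ℝ (Fin n) | t ≤ q.1} := by
    intro t
    exact (isClosed_le continuous_const continuous_fst).measurableSet
  -- eventual vanishing of the integrals
  have hzero : ∀ᶠ t in atBot, (∫ p, F t p ∂(volume.restrict C)) = 0 := by
    filter_upwards [eventually_lt_atBot (-(max R' 0))] with t ht
    have ht0 : t ≤ 0 := by
      have : (0:ℝ) ≤ max R' 0 := le_max_right _ _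
      linarith
    obtain ⟨hInt, hEq⟩ := hVolterra t ht0 ((-t) • c) (hnotC t ht)
    have h1 : (∫ p, F t p ∂(volume.restrict C))
        = ∫ p in C ∩ {q : ℝ × EuclideanSpace ℝ (Fin n) | t ≤ q.1},
            (2 * Real.pi * (-t)) ^ ((n:ℝ)/2) * Real.exp (-(‖c‖^2 * t) / 2) *
              transKernel n t ((-t) • c) p.1 p.2 * Gg p := by
      simp only [hF]
      rw [integral_indicator (hslab t), Measure.restrict_restrict (hslab t), Set.inter_comm]
    rw [h1]
    have h2 : (fun p : ℝ × EuclideanSpace ℝ (Fin n) =>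
        (2 * Real.pi * (-t)) ^ ((n:ℝ)/2) * Real.exp (-(‖c‖^2 * t) / 2) *
          transKernel n t ((-t) • c) p.1 p.2 * Gg p)
        = fun p => ((2 * Real.pi * (-t)) ^ ((n:ℝ)/2) * Real.exp (-(‖c‖^2 * t) / 2)) *
            (Gg p * transKernel n t ((-t) • c) p.1 p.2) := by
      funext p; ring
    rw [h2]
    rw [integral_const_mul]
    rw [hGg]
    simp only [hGg] at hEq ⊢
    rw [hEq, mul_zero]
  -- a.e. measurability
  have hmeas : ∀ t : ℝ, AEStronglyMeasurable (F t) (volume.restrict C) := by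
    intro t
    refine (Measurable.indicator ?_ (hslab t)).aestronglyMeasurable
    have hK : Measurable fun p : ℝ × EuclideanSpace ℝ (Fin n) =>
        transKernel n t ((-t) • c) p.1 p.2 := by
      unfold transKernel
      have h1 : Measurable fun p : ℝ × EuclideanSpace ℝ (Fin n) =>
          (2 * Real.pi * (p.1 - t)) ^ (-(n:ℝ)/2) := by fun_prop
      have h2 : Measurable fun p : ℝ × EuclideanSpace ℝ (Fin n) =>
          Real.exp (-‖p.2 - (-t) • c‖ ^ 2 / (2 * (p.1 - t))) := by
        apply Real.measurable_exp.comp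
        apply Measurable.div
        · exact ((continuous_snd.sub continuous_const).norm.pow 2).neg.measurable
        · exact measurable_const.mul (measurable_fst.sub measurable_const)
      exact h1.mul h2
    exact (measurable_const.mul hK).mul hGgc.measurable
  -- the uniform bound
  set bound : ℝ × EuclideanSpace ℝ (Fin n) → ℝ := fun p =>
    2 ^ ((n:ℝ)/2) * (Real.exp (⟪c, p.2⟫ + ‖c‖ ^ 2 * p.1 / 2) *
      |gt p + (1 / 2) * ∑ i : Fin n, gxx i p|) with hbdef
  have hbound_int : Integrable bound (volume.restrict C) := hint.const_mul _
  have hbound : ∀ᶠ t in atBot, ∀ᵐ p ∂(volume.restrict C), ‖F t p‖ ≤ bound p := by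
    filter_upwards [eventually_le_atBot (min (-(2*T)) (-1))] with t ht
    filter_upwards [ae_restrict_mem hC] with p hp
    have hs0 : p.1 ≤ 0 := hCsub p hp
    have ht1 : t ≤ -1 := le_trans ht (min_le_right _ _)
    have ht2 : t ≤ -(2*T) := le_trans ht (min_le_left _ _)
    have htneg : t < 0 := by linarith
    have hbnn : 0 ≤ bound p := by positivity
    by_cases hts : t ≤ p.1
    · rcases eq_or_lt_of_le hts with heq | hlt
      · -- t = p.1 : kernel vanishes
        have hK0 : transKernel n t ((-t) • c) p.1 p.2 = 0 := by
          unfold transKernel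
          rw [← heq, sub_self, mul_zero, Real.zero_rpow]
          · ring
          · have : (n:ℝ) ≠ 0 := by positivity
            simp only [ne_eq, div_eq_zero_iff, neg_eq_zero]
            push_neg
            exact ⟨this, by norm_num⟩
        have : F t p = 0 := by
          simp only [hF]
          rw [Set.indicator_of_mem (by exact hts)]
          rw [hK0]
          ring
        rw [this]
        simpa using hbnn
      · -- t < p.1 : use the kernel identity and the ratio bounds
        have hFeq : F t p = ((-t)/(p.1-t)) ^ ((n:ℝ)/2) *
            Real.exp (⟪c, p.2⟫ + ‖c‖^2 * p.1 / 2) *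
            Real.exp (-‖p.2 + p.1 • c‖^2 / (2*(p.1-t))) * Gg p := by
          simp only [hF]
          rw [Set.indicator_of_mem (by exact hts)]
          rw [kernel_eq n c p.2 hlt htneg]
        have hAnn : 0 ≤ ((-t)/(p.1-t)) ^ ((n:ℝ)/2) :=
          Real.rpow_nonneg (div_nonneg (by linarith) (by linarith)) _
        have hkey : ((-t)/(p.1-t)) ^ ((n:ℝ)/2) *
            Real.exp (-‖p.2 + p.1 • c‖^2 / (2*(p.1-t))) ≤ 2 ^ ((n:ℝ)/2) := by
          by_cases hbad : ‖p.1 • c + p.2‖ < Real.sqrt (n * (-p.1))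
          · exact ratio_le_two n hlt hs0 (hTkey p hp hbad) ht2 (by positivity)
          · push_neg at hbad
            have hnn : (0:ℝ) ≤ (n:ℝ) * (-p.1) := by
              have : (0:ℝ) ≤ -p.1 := by linarith
              positivity
            have hsq : (n:ℝ) * (-p.1) ≤ ‖p.2 + p.1 • c‖^2 := by
              have h1 : Real.sqrt ((n:ℝ) * (-p.1)) ≤ ‖p.2 + p.1 • c‖ := by
                rwa [add_comm] at hbad
              calc (n:ℝ) * (-p.1) = Real.sqrt ((n:ℝ) * (-p.1)) ^ 2 := (Real.sq_sqrt hnn).symm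
                _ ≤ ‖p.2 + p.1 • c‖ ^ 2 := by
                    apply pow_le_pow_left₀ (Real.sqrt_nonneg _) h1
            calc ((-t)/(p.1-t)) ^ ((n:ℝ)/2) *
                Real.exp (-‖p.2 + p.1 • c‖^2 / (2*(p.1-t))) ≤ 1 :=
                  ratio_le_one n hlt hs0 hsq
              _ ≤ 2 ^ ((n:ℝ)/2) := Real.one_le_rpow (by norm_num) (by positivity)
        rw [hFeq, hbdef]
        rw [Real.norm_eq_abs, abs_mul, abs_mul, abs_mul]
        rw [abs_of_nonneg hAnn, abs_of_nonneg (Real.exp_nonneg _), abs_of_nonneg (Real.exp_nonneg _)]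
        have hGabs : |Gg p| = |gt p + (1 / 2) * ∑ i : Fin n, gxx i p| := by
          rw [hGg]; exact abs_neg _
        rw [hGabs]
        calc ((-t)/(p.1-t)) ^ ((n:ℝ)/2) * Real.exp (⟪c, p.2⟫ + ‖c‖^2 * p.1 / 2) *
            Real.exp (-‖p.2 + p.1 • c‖^2 / (2*(p.1-t))) *
            |gt p + (1 / 2) * ∑ i : Fin n, gxx i p|
            = (((-t)/(p.1-t)) ^ ((n:ℝ)/2) * Real.exp (-‖p.2 + p.1 • c‖^2 / (2*(p.1-t)))) *
              (Real.exp (⟪c, p.2⟫ + ‖c‖^2 * p.1 / 2) *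
                |gt p + (1 / 2) * ∑ i : Fin n, gxx i p|) := by ring
          _ ≤ 2 ^ ((n:ℝ)/2) * (Real.exp (⟪c, p.2⟫ + ‖c‖^2 * p.1 / 2) *
                |gt p + (1 / 2) * ∑ i : Fin n, gxx i p|) := by
              apply mul_le_mul_of_nonneg_right hkey (by positivity)
    · have : F t p = 0 := Set.indicator_of_notMem (by exact hts) _
      rw [this]
      simpa using hbnn
  -- pointwise limit
  have hlim : ∀ᵐ p ∂(volume.restrict C),
      Tendsto (fun t => F t p) atBot (𝓝 (Eex p * Gg p)) := by
    filter_upwards [ae_restrict_mem hC] with p hp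
    have hs0 : p.1 ≤ 0 := hCsub p hp
    have hmain : Tendsto (fun t : ℝ =>
        (((-t)/(p.1-t)) ^ ((n:ℝ)/2) *
          Real.exp (-‖p.2 + p.1 • c‖^2 / (2*(p.1-t)))) * (Eex p * Gg p)) atBot
        (𝓝 (1 * (Eex p * Gg p))) :=
      (ratio_tendsto n p.1 _).mul_const _
    rw [one_mul] at hmain
    apply hmain.congr'
    filter_upwards [eventually_lt_atBot p.1] with t hlt
    have htneg : t < 0 := lt_of_lt_of_le hlt hs0
    simp only [hF]
    rw [Set.indicator_of_mem (by exact hlt.le)]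
    rw [kernel_eq n c p.2 hlt htneg, hEex]
    ring
  -- dominated convergence
  have hDCT := MeasureTheory.tendsto_integral_filter_of_dominated_convergence
    (μ := volume.restrict C) (F := F) (f := fun p => Eex p * Gg p) bound
    (Eventually.of_forall hmeas) hbound hbound_int hlim
  have hZ : Tendsto (fun t => ∫ p, F t p ∂(volume.restrict C)) atBot (𝓝 0) := by
    apply Tendsto.congr' _ tendsto_const_nhds
    filter_upwards [hzero] with t ht
    exact ht.symm
  have := tendsto_nhds_unique hDCT hZ
  rw [hEex, hGg] at this
  exact this
end

section
/- Fix n ≥ 1, c, y ∈ ℝⁿ and s ≤ 0. Then lim_{t→−∞} p((t,−tc),(s,y)) / p((t,−tc),(0,0)) = exp(c·y + (‖c‖²/2)·s), where for t < min(s,0) both kernel values are positive. Equivalently, lim_{t→−∞} ((−t)/(s−t))^{n/2} · exp( (2(c·y)t² + t‖y‖² + ‖c‖²t²s) / (2(t² − st)) ) = exp(c·y + (‖c‖²/2)·s). -/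
open MeasureTheory
open scoped RealInnerProductSpace

lemma aux_inv_atBot : Filter.Tendsto (fun t : ℝ => t⁻¹) Filter.atBot (nhds 0) := by
  have h := (tendsto_inv_atTop_zero (𝕜 := ℝ)).comp Filter.tendsto_neg_atBot_atTop
  have h2 := h.neg
  simp only [Function.comp] at h2
  simpa [inv_neg] using h2

lemma aux_base (s : ℝ) :
    Filter.Tendsto (fun t : ℝ => (-t) / (s - t)) Filter.atBot (nhds 1) := by
  have h0 : Filter.Tendsto (fun t : ℝ => 1 - s * t⁻¹) Filter.atBot (nhds 1) := by
    have := aux_inv_atBot.const_mul s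
    simpa using (tendsto_const_nhds (x := (1:ℝ)) (f := Filter.atBot)).sub this
  have h1 : Filter.Tendsto (fun t : ℝ => (1 - s * t⁻¹)⁻¹) Filter.atBot (nhds 1) := by
    simpa [Function.comp_def] using (continuousAt_inv₀ (x := (1:ℝ)) one_ne_zero).tendsto.comp h0
  refine h1.congr' ?_
  filter_upwards [Filter.eventually_lt_atBot (min s 0)] with t ht
  have ht0 : t < 0 := lt_of_lt_of_le ht (min_le_right _ _)
  have hts : t < s := lt_of_lt_of_le ht (min_le_left _ _)
  have h1 : t ≠ 0 := ne_of_lt ht0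
  have h5 : 1 - s * t⁻¹ = (t - s) / t := by field_simp
  rw [h5, inv_div, show s - t = -(t - s) by ring, div_neg, neg_div, neg_neg]

lemma aux_exp (s a b d : ℝ) :
    Filter.Tendsto
      (fun t : ℝ => (2 * a * t ^ 2 + t * d + b * t ^ 2 * s) / (2 * (t ^ 2 - s * t)))
      Filter.atBot (nhds (a + b / 2 * s)) := by
  have hz : Filter.Tendsto (fun t : ℝ => t⁻¹) Filter.atBot (nhds 0) := aux_inv_atBot
  have hnum : Filter.Tendsto (fun t : ℝ => 2 * a + d * t⁻¹ + b * s) Filter.atBot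
      (nhds (2 * a + b * s)) := by
    have := ((tendsto_const_nhds (x := 2*a) (f := Filter.atBot)).add
      (hz.const_mul d)).add (tendsto_const_nhds (x := b*s))
    simpa using this
  have hden : Filter.Tendsto (fun t : ℝ => 2 * (1 - s * t⁻¹)) Filter.atBot (nhds 2) := by
    have := ((tendsto_const_nhds (x := (1:ℝ)) (f := Filter.atBot)).sub
      (hz.const_mul s)).const_mul 2
    simpa using this
  have h := hnum.div hden two_ne_zero
  have hval : (2 * a + b * s) / 2 = a + b / 2 * s := by ring
  rw [hval] at h
  refine h.congr' ?_
  filter_upwards [Filter.eventually_lt_atBot (min s 0)] with t ht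
  have ht0 : t < 0 := lt_of_lt_of_le ht (min_le_right _ _)
  have hts : t < s := lt_of_lt_of_le ht (min_le_left _ _)
  have h1 : t ≠ 0 := ne_of_lt ht0
  have h3 : (0:ℝ) < 2 * (t ^ 2 - s * t) := by nlinarith
  have h5 : 1 - s * t⁻¹ = (t - s) / t := by field_simp
  have h6 : (0:ℝ) < 2 * (1 - s * t⁻¹) := by
    rw [h5]
    have : (0:ℝ) < (t - s) / t := div_pos_of_neg_of_neg (by linarith) ht0
    linarith
  simp only [Pi.div_apply]
  rw [div_eq_div_iff (ne_of_gt h6) (ne_of_gt h3)]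
  field_simp

theorem stmt2 (n : ℕ) (hn : 1 ≤ n) (c y : EuclideanSpace ℝ (Fin n)) (s : ℝ) (hs : s ≤ 0) :
    (∀ t : ℝ, t < min s 0 →
      0 < transKernel n t ((-t) • c) s y ∧
      0 < transKernel n t ((-t) • c) 0 (0 : EuclideanSpace ℝ (Fin n))) ∧
    Filter.Tendsto
      (fun t => transKernel n t ((-t) • c) s y /
        transKernel n t ((-t) • c) 0 (0 : EuclideanSpace ℝ (Fin n)))
      Filter.atBot (nhds (Real.exp (⟪c, y⟫ + ‖c‖ ^ 2 / 2 * s))) ∧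
    Filter.Tendsto
      (fun t => ((-t) / (s - t)) ^ ((n : ℝ) / 2) *
        Real.exp ((2 * ⟪c, y⟫ * t ^ 2 + t * ‖y‖ ^ 2 + ‖c‖ ^ 2 * t ^ 2 * s) /
          (2 * (t ^ 2 - s * t))))
      Filter.atBot (nhds (Real.exp (⟪c, y⟫ + ‖c‖ ^ 2 / 2 * s))) := by
  have hpos : ∀ t : ℝ, t < min s 0 →
      0 < transKernel n t ((-t) • c) s y ∧
      0 < transKernel n t ((-t) • c) 0 (0 : EuclideanSpace ℝ (Fin n)) := by
    intro t ht
    have ht0 : t < 0 := lt_of_lt_of_le ht (min_le_right _ _)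
    have hts : t < s := lt_of_lt_of_le ht (min_le_left _ _)
    constructor
    · apply mul_pos
      · exact Real.rpow_pos_of_pos (by nlinarith [Real.pi_pos]) _
      · exact Real.exp_pos _
    · apply mul_pos
      · exact Real.rpow_pos_of_pos (by nlinarith [Real.pi_pos]) _
      · exact Real.exp_pos _
  -- the third limit
  have htendsto3 : Filter.Tendsto
      (fun t => ((-t) / (s - t)) ^ ((n : ℝ) / 2) *
        Real.exp ((2 * ⟪c, y⟫ * t ^ 2 + t * ‖y‖ ^ 2 + ‖c‖ ^ 2 * t ^ 2 * s) /
          (2 * (t ^ 2 - s * t))))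
      Filter.atBot (nhds (Real.exp (⟪c, y⟫ + ‖c‖ ^ 2 / 2 * s))) := by
    have hpow : Filter.Tendsto (fun t : ℝ => ((-t) / (s - t)) ^ ((n : ℝ) / 2))
        Filter.atBot (nhds 1) := by
      have hc : ContinuousAt (fun x : ℝ => x ^ ((n : ℝ) / 2)) 1 :=
        Real.continuousAt_rpow_const 1 _ (Or.inl one_ne_zero)
      have := hc.tendsto.comp (aux_base s)
      simpa [Real.one_rpow, Function.comp_def] using this
    have hexp := (Real.continuous_exp.tendsto _).comp
      (aux_exp s ⟪c, y⟫ (‖c‖ ^ 2) (‖y‖ ^ 2))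
    have := hpow.mul hexp
    simpa [Function.comp] using this
  refine ⟨hpos, ?_, htendsto3⟩
  refine htendsto3.congr' ?_
  filter_upwards [Filter.eventually_lt_atBot (min s 0)] with t ht
  have ht0 : t < 0 := lt_of_lt_of_le ht (min_le_right _ _)
  have hts : t < s := lt_of_lt_of_le ht (min_le_left _ _)
  have htne : t ≠ 0 := ne_of_lt ht0
  have hstpos : (0:ℝ) < s - t := by linarith
  have hntpos : (0:ℝ) < 0 - t := by linarith
  have hpi : (0:ℝ) < 2 * Real.pi := by positivity
  -- norm computations
  have hnorm1 : ‖y - (-t) • c‖ ^ 2 = ‖y‖ ^ 2 + 2 * t * ⟪c, y⟫ + t ^ 2 * ‖c‖ ^ 2 := by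
    have : y - (-t) • c = y + t • c := by
      rw [neg_smul, sub_neg_eq_add]
    rw [this, @norm_add_sq_real, real_inner_smul_right, real_inner_comm, norm_smul]
    simp [mul_pow, sq_abs]
    ring
  have hnorm2 : ‖(0 : EuclideanSpace ℝ (Fin n)) - (-t) • c‖ ^ 2 = t ^ 2 * ‖c‖ ^ 2 := by
    rw [zero_sub, norm_neg, norm_smul]
    simp [mul_pow, sq_abs]
  have key : transKernel n t ((-t) • c) s y / transKernel n t ((-t) • c) 0 0
      = ((-t) / (s - t)) ^ ((n : ℝ) / 2) *
        Real.exp ((2 * ⟪c, y⟫ * t ^ 2 + t * ‖y‖ ^ 2 + ‖c‖ ^ 2 * t ^ 2 * s) /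
          (2 * (t ^ 2 - s * t))) := by
    unfold transKernel
    rw [hnorm1, hnorm2, mul_div_mul_comm, ← Real.exp_sub]
    congr 1
    · -- rpow ratio
      rw [← Real.div_rpow (by positivity) (by positivity),
        mul_div_mul_left _ _ (ne_of_gt hpi)]
      rw [show ((s - t) / (0 - t)) = ((-t) / (s - t))⁻¹ by rw [inv_div]; ring_nf]
      have hb : (0:ℝ) < -t / (s - t) := div_pos (by linarith) hstpos
      rw [Real.inv_rpow hb.le, ← Real.rpow_neg hb.le]
      congr 1
      ring
    · -- exponent difference
      have h3 : t ^ 2 - s * t ≠ 0 := by nlinarith [sq_nonneg t]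
      have h4 : s - t ≠ 0 := ne_of_gt hstpos
      have h5 : (0:ℝ) - t ≠ 0 := ne_of_gt hntpos
      have h6 : t - s ≠ 0 := ne_of_lt (by linarith)
      congr 1
      field_simp
      ring
  exact key.symm
end

section
/- Let r ≥ 0 and 0 < ε ≤ b∞ < ∞. Let h : [0, b∞] → ℝ be bounded and measurable, and let d : [0, b∞] → (−∞, 0] be nonincreasing with d(ε) < 0. Then lim_{c→∞} c² ∫_ε^{b∞} e^{(c²/2 − r)·d(y) + cy} h(y) dy = 0. Consequently, lim_{c→∞} c² ∫_0^{b∞} e^{(c²/2 − r)·d(y) + cy} h(y) dy exists if and only if lim_{c→∞} c² ∫_0^{ε} e^{(c²/2 − r)·d(y) + cy} h(y) dy exists, and in that case the two limits coincide. -/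
/-!
On `(ε, b∞]` the monotonicity of `d` gives `d y ≤ d ε < 0`, so for large `c` the integrand
is bounded by `M · exp (d ε c² / 2 + b∞ c - r d ε)`, a Gaussian in `c` that beats the
factor `c²`.
The second statement follows by splitting `(0, b∞] = (0, ε] ∪ (ε, b∞]`.
-/

open MeasureTheory Filter Topology Set Real

theorem tendsto_sq_mul_exp_mul_sq {a : ℝ} (ha : a < 0) :
    Tendsto (fun c : ℝ => c ^ 2 * exp (a * c ^ 2)) atTop (𝓝 0) := by
  have := (tendsto_rpow_mul_exp_neg_mul_atTop_nhds_zero 1 (-a) (neg_pos.2 ha)).comp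
    (tendsto_pow_atTop (α := ℝ) two_ne_zero)
  simpa [Function.comp_def] using this

theorem tendsto_sq_mul_exp_quadratic {a : ℝ} (ha : a < 0) (b k : ℝ) :
    Tendsto (fun c : ℝ => c ^ 2 * exp (a * c ^ 2 + b * c + k)) atTop (𝓝 0) := by
  have hlow : Tendsto (fun c : ℝ => c * (a / 2 * c + b) + k) atTop atBot :=
    tendsto_atBot_add_const_right _ k <| tendsto_id.atTop_mul_atBot₀ <|
      tendsto_atBot_add_const_right _ b <| tendsto_id.const_mul_atTop_of_neg (by linarith)
  refine squeeze_zero' (Eventually.of_forall fun c => by positivity) ?_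
    (tendsto_sq_mul_exp_mul_sq (a := a / 2) (by linarith))
  filter_upwards [hlow.eventually_le_atBot 0] with c hc
  gcongr
  linarith

theorem AntitoneOn.integrableOn_exp_mul_add_mul_mul {d h : ℝ → ℝ} {a b p q M : ℝ}
    (hd : AntitoneOn d (Icc a b)) (hh : Measurable h) (hbd : ∀ y ∈ Ioc a b, |h y| ≤ M) :
    IntegrableOn (fun y => exp (p * d y + q * y) * h y) (Ioc a b) := by
  have hdm : AEMeasurable d (volume.restrict (Ioc a b)) :=
    aemeasurable_restrict_of_antitoneOn measurableSet_Ioc (hd.mono Ioc_subset_Icc_self)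
  have hm : AEStronglyMeasurable (fun y => exp (p * d y + q * y) * h y)
      (volume.restrict (Ioc a b)) :=
    ((measurable_exp.comp_aemeasurable ((hdm.const_mul p).add (aemeasurable_id.const_mul q))).mul
      hh.aemeasurable).aestronglyMeasurable
  refine .of_bound measure_Ioc_lt_top hm
    (exp (|p| * max |d b| |d a| + |q| * max |a| |b|) * M)
    (ae_restrict_of_forall_mem measurableSet_Ioc fun y hy => ?_)
  have hyI : y ∈ Icc a b := Ioc_subset_Icc_self hy
  have hab : a ≤ b := hy.1.le.trans hy.2
  have hdy : |d y| ≤ max |d b| |d a| :=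
    abs_le_max_abs_abs (hd hyI (right_mem_Icc.2 hab) hy.2)
      (hd (left_mem_Icc.2 hab) hyI hy.1.le)
  have hexp : p * d y + q * y ≤ |p| * max |d b| |d a| + |q| * max |a| |b| :=
    calc p * d y + q * y ≤ |p| * |d y| + |q| * |y| := by
          rw [← abs_mul, ← abs_mul]; exact (le_abs_self _).trans (abs_add_le _ _)
      _ ≤ _ := by gcongr; exact abs_le_max_abs_abs hy.1.le hy.2
  rw [norm_mul, norm_of_nonneg (exp_pos _).le, norm_eq_abs]
  exact mul_le_mul (exp_le_exp.2 hexp) (hbd y hy) (abs_nonneg _) (exp_pos _).le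

theorem tendsto_sq_mul_setIntegral_exp_nhds_zero {d h : ℝ → ℝ} {r ε b M : ℝ}
    (hd : AntitoneOn d (Icc ε b)) (hdε : d ε < 0) (hbd : ∀ y ∈ Ioc ε b, |h y| ≤ M) :
    Tendsto (fun c => c ^ 2 * ∫ y in Ioc ε b, exp ((c ^ 2 / 2 - r) * d y + c * y) * h y)
      atTop (𝓝 0) := by
  rw [tendsto_zero_iff_norm_tendsto_zero]
  have hlim := (tendsto_sq_mul_exp_quadratic (a := d ε / 2) (by linarith) b (-r * d ε)).const_mul
    (M * volume.real (Ioc ε b))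
  rw [mul_zero] at hlim
  refine squeeze_zero' (Eventually.of_forall fun c => norm_nonneg _) ?_ hlim
  filter_upwards [eventually_ge_atTop (max 1 (2 * r))] with c hc
  have hc1 : 1 ≤ c := le_of_max_le_left hc
  have hcr : 0 ≤ c ^ 2 / 2 - r := by nlinarith [le_of_max_le_right hc]
  have hpt : ∀ y ∈ Ioc ε b, ‖exp ((c ^ 2 / 2 - r) * d y + c * y) * h y‖
      ≤ exp (d ε / 2 * c ^ 2 + b * c + -r * d ε) * M := by
    intro y hy
    have hdy : d y ≤ d ε :=
      hd (left_mem_Icc.2 (hy.1.le.trans hy.2)) (Ioc_subset_Icc_self hy) hy.1.le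
    have hexp : (c ^ 2 / 2 - r) * d y + c * y ≤ d ε / 2 * c ^ 2 + b * c + -r * d ε := by
      linarith [mul_le_mul_of_nonneg_left hdy hcr,
        mul_le_mul_of_nonneg_left hy.2 (zero_le_one.trans hc1)]
    rw [norm_mul, norm_of_nonneg (exp_pos _).le, norm_eq_abs]
    exact mul_le_mul (exp_le_exp.2 hexp) (hbd y hy) (abs_nonneg _) (exp_pos _).le
  calc ‖c ^ 2 * ∫ y in Ioc ε b, exp ((c ^ 2 / 2 - r) * d y + c * y) * h y‖
      = c ^ 2 * ‖∫ y in Ioc ε b, exp ((c ^ 2 / 2 - r) * d y + c * y) * h y‖ := by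
        rw [norm_mul, norm_pow, norm_eq_abs, sq_abs]
    _ ≤ c ^ 2 * (exp (d ε / 2 * c ^ 2 + b * c + -r * d ε) * M * volume.real (Ioc ε b)) := by
        gcongr; exact norm_setIntegral_le_of_norm_le_const measure_Ioc_lt_top hpt
    _ = _ := by ring

theorem setIntegral_Ioc_add_setIntegral_Ioc {E : Type*} [NormedAddCommGroup E] [NormedSpace ℝ E]
    {f : ℝ → E} {a b c : ℝ} (hab : a ≤ b) (hbc : b ≤ c) (hf : IntegrableOn f (Ioc a c)) :
    (∫ y in Ioc a b, f y) + ∫ y in Ioc b c, f y = ∫ y in Ioc a c, f y := by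
  rw [← Ioc_union_Ioc_eq_Ioc hab hbc, setIntegral_union (Ioc_disjoint_Ioc_of_le le_rfl)
    measurableSet_Ioc (hf.mono_set (Ioc_subset_Ioc_right hbc))
    (hf.mono_set (Ioc_subset_Ioc_left hab))]

theorem Filter.tendsto_add_iff_of_tendsto_zero {α G : Type*} [AddCommGroup G] [TopologicalSpace G]
    [IsTopologicalAddGroup G] {l : Filter α} {f g : α → G} {x : G} (hg : Tendsto g l (𝓝 0)) :
    Tendsto (fun t => f t + g t) l (𝓝 x) ↔ Tendsto f l (𝓝 x) :=
  ⟨fun H => by simpa using H.sub hg, fun H => by simpa using H.add hg⟩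

theorem stmt6_general (r ε bInfty : ℝ) (hε : 0 < ε) (hεb : ε ≤ bInfty)
    (h : ℝ → ℝ) (hmeas : Measurable h) (M : ℝ) (hbd : ∀ y ∈ Set.Icc 0 bInfty, |h y| ≤ M)
    (d : ℝ → ℝ) (hd : AntitoneOn d (Set.Icc 0 bInfty))
    (hdε : d ε < 0) :
    Filter.Tendsto (fun c => c ^ 2 * ∫ y in Set.Ioc ε bInfty,
        Real.exp ((c ^ 2 / 2 - r) * d y + c * y) * h y) Filter.atTop (nhds 0) ∧
    ∀ L : ℝ,
      Filter.Tendsto (fun c => c ^ 2 * ∫ y in Set.Ioc 0 bInfty,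
          Real.exp ((c ^ 2 / 2 - r) * d y + c * y) * h y) Filter.atTop (nhds L) ↔
      Filter.Tendsto (fun c => c ^ 2 * ∫ y in Set.Ioc 0 ε,
          Real.exp ((c ^ 2 / 2 - r) * d y + c * y) * h y) Filter.atTop (nhds L) := by
  have htail := tendsto_sq_mul_setIntegral_exp_nhds_zero (r := r)
    (hd.mono (Icc_subset_Icc_left hε.le)) hdε
    fun y hy => hbd y ⟨(hε.trans hy.1).le, hy.2⟩
  refine ⟨htail, fun L => ?_⟩
  refine (tendsto_congr fun c => ?_).trans (tendsto_add_iff_of_tendsto_zero htail)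
  rw [← mul_add, setIntegral_Ioc_add_setIntegral_Ioc hε.le hεb
    (hd.integrableOn_exp_mul_add_mul_mul hmeas fun y hy => hbd y (Ioc_subset_Icc_self hy))]

theorem stmt6 (r ε bInfty : ℝ) (hr : 0 ≤ r) (hε : 0 < ε) (hεb : ε ≤ bInfty)
    (h : ℝ → ℝ) (hmeas : Measurable h) (M : ℝ) (hbd : ∀ y ∈ Set.Icc 0 bInfty, |h y| ≤ M)
    (d : ℝ → ℝ) (hd : AntitoneOn d (Set.Icc 0 bInfty)) (hd0 : ∀ y ∈ Set.Icc 0 bInfty, d y ≤ 0)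
    (hdε : d ε < 0) :
    Filter.Tendsto (fun c => c ^ 2 * ∫ y in Set.Ioc ε bInfty,
        Real.exp ((c ^ 2 / 2 - r) * d y + c * y) * h y) Filter.atTop (nhds 0) ∧
    ∀ L : ℝ,
      Filter.Tendsto (fun c => c ^ 2 * ∫ y in Set.Ioc 0 bInfty,
          Real.exp ((c ^ 2 / 2 - r) * d y + c * y) * h y) Filter.atTop (nhds L) ↔
      Filter.Tendsto (fun c => c ^ 2 * ∫ y in Set.Ioc 0 ε,
          Real.exp ((c ^ 2 / 2 - r) * d y + c * y) * h y) Filter.atTop (nhds L) :=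
  stmt6_general r ε bInfty hε hεb h hmeas M hbd d hd hdε
end

section
/- Let r ≥ 0, b∞ ∈ (0, ∞) and m > 0. Let d : (0, b∞] → (−∞, 0] be nonincreasing with d(y) < 0 for every y ∈ (0, b∞], and let h : (0, b∞] → ℝ be bounded and measurable with h(y) = m·y + o(y) as y ↘ 0 (i.e. (h(y) − m·y)/y → 0 as y ↘ 0). If the limit L := lim_{c→∞} c² ∫_0^{b∞} e^{(c²/2 − r)·d(y) + cy} m·y dy exists in ℝ, then lim_{c→∞} c² ∫_0^{b∞} e^{(c²/2 − r)·d(y) + cy} h(y) dy exists and equals L. -/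
open MeasureTheory

private lemma aux_int {r b c C : ℝ} (hb : 0 < b) (hc : 0 ≤ c) (hcr : r ≤ c ^ 2 / 2)
    {d : ℝ → ℝ} (hdae : AEMeasurable d (volume.restrict (Set.Ioc 0 b)))
    (hdneg : ∀ y ∈ Set.Ioc 0 b, d y ≤ 0)
    {g : ℝ → ℝ} (hg : Measurable g) (hgC : ∀ y ∈ Set.Ioc 0 b, |g y| ≤ C) :
    IntegrableOn (fun y => Real.exp ((c ^ 2 / 2 - r) * d y + c * y) * g y)
      (Set.Ioc 0 b) := by
  have hsm : AEStronglyMeasurable (fun y => Real.exp ((c ^ 2 / 2 - r) * d y + c * y) * g y)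
      (volume.restrict (Set.Ioc 0 b)) := by
    apply AEStronglyMeasurable.mul
    · exact (Real.measurable_exp.comp_aemeasurable
        ((hdae.const_mul _).add (aemeasurable_id.const_mul c))).aestronglyMeasurable
    · exact hg.aestronglyMeasurable.restrict
  refine Integrable.mono' (integrable_const (Real.exp (c * b) * C)) hsm ?_
  rw [ae_restrict_iff' measurableSet_Ioc]
  filter_upwards with y hy
  have h1 : (c ^ 2 / 2 - r) * d y + c * y ≤ c * b := by
    have h2 : (c ^ 2 / 2 - r) * d y ≤ 0 :=
      mul_nonpos_of_nonneg_of_nonpos (by linarith) (hdneg y hy)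
    have h3 : c * y ≤ c * b := mul_le_mul_of_nonneg_left hy.2 hc
    linarith
  rw [norm_mul, Real.norm_eq_abs, Real.norm_eq_abs, Real.abs_exp]
  exact mul_le_mul (Real.exp_le_exp.mpr h1) (hgC y hy) (abs_nonneg _) (Real.exp_nonneg _)

private lemma aux_tend {A B r : ℝ} (hA : A < 0) :
    Filter.Tendsto (fun c : ℝ => c ^ 2 * Real.exp ((c ^ 2 / 2 - r) * A + c * B))
      Filter.atTop (nhds 0) := by
  have hA0 : A ≠ 0 := hA.ne
  have h1 : Filter.Tendsto (fun c : ℝ => -A / 4 * c ^ 2) Filter.atTop Filter.atTop :=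
    (Filter.tendsto_pow_atTop two_ne_zero).const_mul_atTop (by linarith)
  have h2 := ((Real.tendsto_pow_mul_exp_neg_atTop_nhds_zero 1).comp h1).const_mul (-4 / A)
  rw [mul_zero] at h2
  have hsimp : ∀ x : ℝ, -4 / A * ((-A / 4 * x ^ 2) ^ 1 * Real.exp (-(-A / 4 * x ^ 2)))
      = x ^ 2 * Real.exp (-(-A / 4 * x ^ 2)) := by
    intro x
    have h4 : -4 / A * (-A / 4) = 1 := by field_simp
    calc -4 / A * ((-A / 4 * x ^ 2) ^ 1 * Real.exp (-(-A / 4 * x ^ 2)))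
        = -4 / A * (-A / 4) * (x ^ 2 * Real.exp (-(-A / 4 * x ^ 2))) := by ring
      _ = x ^ 2 * Real.exp (-(-A / 4 * x ^ 2)) := by rw [h4, one_mul]
  apply squeeze_zero' (g := fun c => -4 / A * ((-A / 4 * c ^ 2) ^ 1 *
    Real.exp (-(-A / 4 * c ^ 2))))
  · filter_upwards with c
    positivity
  · filter_upwards [Filter.eventually_ge_atTop (1 : ℝ),
      Filter.eventually_ge_atTop ((4 * |B| + 4 * |r * A| + 4) / (-A))] with c hc1 hc2
    have hc0 : (0:ℝ) ≤ c := by linarith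
    rw [div_le_iff₀ (by linarith : (0:ℝ) < -A)] at hc2
    have hAc : A * c ≤ -(4 * |B| + 4 * |r * A| + 4) := by nlinarith
    have hexp : (c ^ 2 / 2 - r) * A + c * B ≤ -(-A / 4 * c ^ 2) := by
      have hB : B * c ≤ |B| * c := mul_le_mul_of_nonneg_right (le_abs_self B) hc0
      have hrA : -(r * A) ≤ |r * A| := neg_le_abs _
      have hac2 : A * c * c ≤ -(4 * |B| + 4 * |r * A| + 4) * c :=
        mul_le_mul_of_nonneg_right hAc hc0
      have hrc : |r * A| ≤ |r * A| * c := le_mul_of_one_le_right (abs_nonneg _) hc1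
      nlinarith
    rw [hsimp c]
    exact mul_le_mul_of_nonneg_left (Real.exp_le_exp.mpr hexp) (by positivity)
  · exact h2

theorem stmt7 (r m bInfty : ℝ) (hr : 0 ≤ r) (hm : 0 < m) (hb : 0 < bInfty)
    (d : ℝ → ℝ) (hd : AntitoneOn d (Set.Ioc 0 bInfty))
    (hdneg : ∀ y ∈ Set.Ioc 0 bInfty, d y < 0)
    (h : ℝ → ℝ) (hmeas : Measurable h) (M : ℝ) (hbd : ∀ y ∈ Set.Ioc 0 bInfty, |h y| ≤ M)
    (hlin : Filter.Tendsto (fun y => (h y - m * y) / y)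
      (nhdsWithin 0 (Set.Ioi 0)) (nhds 0))
    (L : ℝ)
    (hL : Filter.Tendsto (fun c => c ^ 2 * ∫ y in Set.Ioc 0 bInfty,
        Real.exp ((c ^ 2 / 2 - r) * d y + c * y) * (m * y)) Filter.atTop (nhds L)) :
    Filter.Tendsto (fun c => c ^ 2 * ∫ y in Set.Ioc 0 bInfty,
        Real.exp ((c ^ 2 / 2 - r) * d y + c * y) * h y) Filter.atTop (nhds L) := by
  set G := fun c : ℝ => c ^ 2 * ∫ y in Set.Ioc 0 bInfty,
    Real.exp ((c ^ 2 / 2 - r) * d y + c * y) * h y with hG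
  set F := fun c : ℝ => c ^ 2 * ∫ y in Set.Ioc 0 bInfty,
    Real.exp ((c ^ 2 / 2 - r) * d y + c * y) * (m * y) with hF
  have hdae : AEMeasurable d (volume.restrict (Set.Ioc 0 bInfty)) :=
    aemeasurable_restrict_of_antitoneOn measurableSet_Ioc hd
  have hM0 : 0 ≤ M := le_trans (abs_nonneg _) (hbd bInfty ⟨hb, le_refl _⟩)
  have hF1 : ∀ᶠ c in Filter.atTop, F c ≤ |L| + 1 := by
    filter_upwards [Metric.tendsto_nhds.mp hL 1 one_pos] with c hc
    rw [Real.dist_eq] at hc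
    have hc' := abs_lt.mp hc
    have hL' := le_abs_self L
    linarith [hc'.2]
  have key : Filter.Tendsto (fun c => G c - F c) Filter.atTop (nhds 0) := by
    rw [NormedAddCommGroup.tendsto_nhds_zero]
    intro ε hε
    set ε' := ε * m / (2 * (|L| + 1)) with hε'def
    have hL1 : (0:ℝ) < |L| + 1 := by positivity
    have hε' : 0 < ε' := by positivity
    -- obtain δ from hlin
    have hev : ∀ᶠ y in nhdsWithin 0 (Set.Ioi 0), |(h y - m * y) / y| < ε' := by
      filter_upwards [Metric.tendsto_nhds.mp hlin ε' hε'] with y hy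
      rwa [Real.dist_eq, sub_zero] at hy
    obtain ⟨δ₀, hδ₀, hball⟩ := Metric.mem_nhdsWithin_iff.mp hev
    set δ := min (δ₀ / 2) bInfty with hδdef
    have hδpos : 0 < δ := lt_min (by linarith) hb
    have hδle : δ ≤ bInfty := min_le_right _ _
    have hδmem : δ ∈ Set.Ioc 0 bInfty := ⟨hδpos, hδle⟩
    have hsub : ∀ y ∈ Set.Ioc 0 δ, |h y - m * y| ≤ ε' * y := by
      intro y hy
      have hy0 : 0 < y := hy.1
      have hmem : y ∈ Metric.ball (0:ℝ) δ₀ ∩ Set.Ioi 0 := by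
        constructor
        · rw [Metric.mem_ball, Real.dist_eq, sub_zero, abs_of_pos hy0]
          calc y ≤ δ := hy.2
            _ ≤ δ₀ / 2 := min_le_left _ _
            _ < δ₀ := by linarith
        · exact hy0
      have h1 : |(h y - m * y) / y| < ε' := hball hmem
      rw [abs_div, abs_of_pos hy0, div_lt_iff₀ hy0] at h1
      linarith
    -- tendsto of the tail term
    have hdδ : d δ < 0 := hdneg δ hδmem
    have htail := (aux_tend (B := bInfty) (r := r) hdδ).mul_const ((M + m * bInfty) * bInfty)
    rw [zero_mul] at htail
    have hB := htail.eventually_lt_const (by positivity : (0:ℝ) < ε / 2)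
    filter_upwards [Filter.eventually_ge_atTop (max 2 (2 * r + 2)), hF1, hB] with c hc hFc hBc
    have hc2 : 2 ≤ c := le_trans (le_max_left _ _) hc
    have hcr' : 2 * r + 2 ≤ c := le_trans (le_max_right _ _) hc
    have hc0 : 0 ≤ c := by linarith
    have hcr : r ≤ c ^ 2 / 2 := by nlinarith
    have hdneg' : ∀ y ∈ Set.Ioc 0 bInfty, d y ≤ 0 := fun y hy => (hdneg y hy).le
    -- integrability
    have I_h : IntegrableOn (fun y => Real.exp ((c ^ 2 / 2 - r) * d y + c * y) * h y)
        (Set.Ioc 0 bInfty) := aux_int hb hc0 hcr hdae hdneg' hmeas hbd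
    have I_my : IntegrableOn (fun y => Real.exp ((c ^ 2 / 2 - r) * d y + c * y) * (m * y))
        (Set.Ioc 0 bInfty) := by
      refine aux_int (C := m * bInfty) hb hc0 hcr hdae hdneg' (measurable_id.const_mul m) (fun y hy => ?_)
      rw [abs_of_pos (mul_pos hm hy.1)]
      exact mul_le_mul_of_nonneg_left hy.2 hm.le
    have I_sub : IntegrableOn
        (fun y => Real.exp ((c ^ 2 / 2 - r) * d y + c * y) * (h y - m * y))
        (Set.Ioc 0 bInfty) := by
      refine aux_int (C := M + m * bInfty) hb hc0 hcr hdae hdneg'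
        (hmeas.sub (measurable_id.const_mul m)) (fun y hy => ?_)
      have h1 : |h y - m * y| ≤ |h y| + |m * y| := abs_sub _ _
      have h2 : |m * y| = m * y := abs_of_pos (mul_pos hm hy.1)
      have h3 : m * y ≤ m * bInfty := mul_le_mul_of_nonneg_left hy.2 hm.le
      have := hbd y hy
      linarith
    have I_eps : IntegrableOn (fun y => Real.exp ((c ^ 2 / 2 - r) * d y + c * y) * (ε' * y))
        (Set.Ioc 0 bInfty) := by
      refine aux_int (C := ε' * bInfty) hb hc0 hcr hdae hdneg' (measurable_id.const_mul ε') (fun y hy => ?_)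
      rw [abs_of_pos (mul_pos hε' hy.1)]
      exact mul_le_mul_of_nonneg_left hy.2 hε'.le
    -- split the integral
    have hsplit : (∫ y in Set.Ioc 0 bInfty,
          Real.exp ((c ^ 2 / 2 - r) * d y + c * y) * (h y - m * y))
        = (∫ y in Set.Ioc 0 δ, Real.exp ((c ^ 2 / 2 - r) * d y + c * y) * (h y - m * y))
        + (∫ y in Set.Ioc δ bInfty,
            Real.exp ((c ^ 2 / 2 - r) * d y + c * y) * (h y - m * y)) := by
      rw [← setIntegral_union (Set.Ioc_disjoint_Ioc_of_le le_rfl) measurableSet_Ioc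
        (I_sub.mono_set (Set.Ioc_subset_Ioc_right hδle))
        (I_sub.mono_set (Set.Ioc_subset_Ioc_left hδpos.le)),
        Set.Ioc_union_Ioc_eq_Ioc hδpos.le hδle]
    -- term A bound
    have hA : |∫ y in Set.Ioc 0 δ, Real.exp ((c ^ 2 / 2 - r) * d y + c * y) * (h y - m * y)|
        ≤ ε' / m * ∫ y in Set.Ioc 0 bInfty,
            Real.exp ((c ^ 2 / 2 - r) * d y + c * y) * (m * y) := by
      have step1 : |∫ y in Set.Ioc 0 δ,
            Real.exp ((c ^ 2 / 2 - r) * d y + c * y) * (h y - m * y)|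
          ≤ ∫ y in Set.Ioc 0 δ, Real.exp ((c ^ 2 / 2 - r) * d y + c * y) * (ε' * y) := by
        rw [← Real.norm_eq_abs]
        refine norm_integral_le_of_norm_le (I_eps.mono_set (Set.Ioc_subset_Ioc_right hδle)) ?_
        rw [ae_restrict_iff' measurableSet_Ioc]
        filter_upwards with y hy
        rw [norm_mul, Real.norm_eq_abs, Real.norm_eq_abs, Real.abs_exp]
        exact mul_le_mul_of_nonneg_left (hsub y hy) (Real.exp_nonneg _)
      have step2 : (∫ y in Set.Ioc 0 δ, Real.exp ((c ^ 2 / 2 - r) * d y + c * y) * (ε' * y))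
          = ε' / m * ∫ y in Set.Ioc 0 δ,
              Real.exp ((c ^ 2 / 2 - r) * d y + c * y) * (m * y) := by
        rw [← integral_const_mul]
        apply setIntegral_congr_fun measurableSet_Ioc
        intro y _
        field_simp
      have step3 : (∫ y in Set.Ioc 0 δ, Real.exp ((c ^ 2 / 2 - r) * d y + c * y) * (m * y))
          ≤ ∫ y in Set.Ioc 0 bInfty,
              Real.exp ((c ^ 2 / 2 - r) * d y + c * y) * (m * y) := by
        refine setIntegral_mono_set I_my ?_ (Set.Ioc_subset_Ioc_right hδle).eventuallyLE
        rw [Filter.EventuallyLE, ae_restrict_iff' measurableSet_Ioc]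
        filter_upwards with y hy
        exact mul_nonneg (Real.exp_nonneg _) (mul_pos hm hy.1).le
      calc |∫ y in Set.Ioc 0 δ, Real.exp ((c ^ 2 / 2 - r) * d y + c * y) * (h y - m * y)|
          ≤ ∫ y in Set.Ioc 0 δ, Real.exp ((c ^ 2 / 2 - r) * d y + c * y) * (ε' * y) := step1
        _ = ε' / m * ∫ y in Set.Ioc 0 δ,
              Real.exp ((c ^ 2 / 2 - r) * d y + c * y) * (m * y) := step2
        _ ≤ ε' / m * ∫ y in Set.Ioc 0 bInfty,
              Real.exp ((c ^ 2 / 2 - r) * d y + c * y) * (m * y) :=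
            mul_le_mul_of_nonneg_left step3 (by positivity)
    -- term B bound
    have hKnn : (0:ℝ) ≤ Real.exp ((c ^ 2 / 2 - r) * d δ + c * bInfty) * (M + m * bInfty) := by
      have : (0:ℝ) ≤ M + m * bInfty := by positivity
      positivity
    have hBbd : |∫ y in Set.Ioc δ bInfty,
          Real.exp ((c ^ 2 / 2 - r) * d y + c * y) * (h y - m * y)|
        ≤ Real.exp ((c ^ 2 / 2 - r) * d δ + c * bInfty) * (M + m * bInfty) * (bInfty - δ) := by
      have step1 : |∫ y in Set.Ioc δ bInfty,
            Real.exp ((c ^ 2 / 2 - r) * d y + c * y) * (h y - m * y)|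
          ≤ ∫ _y in Set.Ioc δ bInfty,
              Real.exp ((c ^ 2 / 2 - r) * d δ + c * bInfty) * (M + m * bInfty) := by
        rw [← Real.norm_eq_abs]
        refine norm_integral_le_of_norm_le (integrable_const _) ?_
        rw [ae_restrict_iff' measurableSet_Ioc]
        filter_upwards with y hy
        have hymem : y ∈ Set.Ioc 0 bInfty := ⟨lt_trans hδpos hy.1, hy.2⟩
        have hdy : d y ≤ d δ := hd hδmem hymem hy.1.le
        have hexp : (c ^ 2 / 2 - r) * d y + c * y
            ≤ (c ^ 2 / 2 - r) * d δ + c * bInfty := by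
          have h1 : (c ^ 2 / 2 - r) * d y ≤ (c ^ 2 / 2 - r) * d δ :=
            mul_le_mul_of_nonneg_left hdy (by linarith)
          have h2 : c * y ≤ c * bInfty := mul_le_mul_of_nonneg_left hymem.2 hc0
          linarith
        have habs : |h y - m * y| ≤ M + m * bInfty := by
          have h1 : |h y - m * y| ≤ |h y| + |m * y| := abs_sub _ _
          have h2 : |m * y| = m * y := abs_of_pos (mul_pos hm hymem.1)
          have h3 : m * y ≤ m * bInfty := mul_le_mul_of_nonneg_left hymem.2 hm.le
          have := hbd y hymem
          linarith
        rw [norm_mul, Real.norm_eq_abs, Real.norm_eq_abs, Real.abs_exp]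
        exact mul_le_mul (Real.exp_le_exp.mpr hexp) habs (abs_nonneg _) (Real.exp_nonneg _)
      have step2 : (∫ _y in Set.Ioc δ bInfty,
            Real.exp ((c ^ 2 / 2 - r) * d δ + c * bInfty) * (M + m * bInfty))
          = Real.exp ((c ^ 2 / 2 - r) * d δ + c * bInfty) * (M + m * bInfty)
            * (bInfty - δ) := by
        rw [setIntegral_const, Real.volume_real_Ioc_of_le (by linarith), smul_eq_mul, mul_comm]
      rw [← step2]
      exact step1
    -- combine
    have hGF : G c - F c = c ^ 2 * ((∫ y in Set.Ioc 0 δ,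
          Real.exp ((c ^ 2 / 2 - r) * d y + c * y) * (h y - m * y))
        + ∫ y in Set.Ioc δ bInfty,
            Real.exp ((c ^ 2 / 2 - r) * d y + c * y) * (h y - m * y)) := by
      rw [← hsplit, hG, hF]
      have : (∫ y in Set.Ioc 0 bInfty,
            Real.exp ((c ^ 2 / 2 - r) * d y + c * y) * (h y - m * y))
          = (∫ y in Set.Ioc 0 bInfty, Real.exp ((c ^ 2 / 2 - r) * d y + c * y) * h y)
            - ∫ y in Set.Ioc 0 bInfty,
                Real.exp ((c ^ 2 / 2 - r) * d y + c * y) * (m * y) := by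
        rw [← integral_sub I_h I_my]
        apply setIntegral_congr_fun measurableSet_Ioc
        intro y _
        ring
      rw [this]
      ring
    rw [Real.norm_eq_abs, hGF]
    have hc2nn : (0:ℝ) ≤ c ^ 2 := sq_nonneg c
    have habs : |c ^ 2 * ((∫ y in Set.Ioc 0 δ,
          Real.exp ((c ^ 2 / 2 - r) * d y + c * y) * (h y - m * y))
        + ∫ y in Set.Ioc δ bInfty,
            Real.exp ((c ^ 2 / 2 - r) * d y + c * y) * (h y - m * y))|
        ≤ c ^ 2 * |∫ y in Set.Ioc 0 δ,
            Real.exp ((c ^ 2 / 2 - r) * d y + c * y) * (h y - m * y)|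
          + c ^ 2 * |∫ y in Set.Ioc δ bInfty,
              Real.exp ((c ^ 2 / 2 - r) * d y + c * y) * (h y - m * y)| := by
      rw [abs_mul, abs_of_nonneg hc2nn, ← mul_add]
      exact mul_le_mul_of_nonneg_left (abs_add_le _ _) hc2nn
    have htermA : c ^ 2 * |∫ y in Set.Ioc 0 δ,
          Real.exp ((c ^ 2 / 2 - r) * d y + c * y) * (h y - m * y)| ≤ ε / 2 := by
      have h1 : c ^ 2 * |∫ y in Set.Ioc 0 δ,
            Real.exp ((c ^ 2 / 2 - r) * d y + c * y) * (h y - m * y)|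
          ≤ ε' / m * F c := by
        rw [hF]
        calc c ^ 2 * |∫ y in Set.Ioc 0 δ,
              Real.exp ((c ^ 2 / 2 - r) * d y + c * y) * (h y - m * y)|
            ≤ c ^ 2 * (ε' / m * ∫ y in Set.Ioc 0 bInfty,
                Real.exp ((c ^ 2 / 2 - r) * d y + c * y) * (m * y)) :=
              mul_le_mul_of_nonneg_left hA hc2nn
          _ = ε' / m * (c ^ 2 * ∫ y in Set.Ioc 0 bInfty,
                Real.exp ((c ^ 2 / 2 - r) * d y + c * y) * (m * y)) := by ring
      have h2 : ε' / m * F c ≤ ε' / m * (|L| + 1) :=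
        mul_le_mul_of_nonneg_left hFc (by positivity)
      have h3 : ε' / m * (|L| + 1) = ε / 2 := by
        rw [hε'def]
        field_simp
      linarith
    have htermB : c ^ 2 * |∫ y in Set.Ioc δ bInfty,
          Real.exp ((c ^ 2 / 2 - r) * d y + c * y) * (h y - m * y)| < ε / 2 := by
      have h1 : c ^ 2 * |∫ y in Set.Ioc δ bInfty,
            Real.exp ((c ^ 2 / 2 - r) * d y + c * y) * (h y - m * y)|
          ≤ c ^ 2 * (Real.exp ((c ^ 2 / 2 - r) * d δ + c * bInfty) * (M + m * bInfty)
              * (bInfty - δ)) := mul_le_mul_of_nonneg_left hBbd hc2nn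
      have h2 : c ^ 2 * (Real.exp ((c ^ 2 / 2 - r) * d δ + c * bInfty) * (M + m * bInfty)
            * (bInfty - δ))
          ≤ c ^ 2 * Real.exp ((c ^ 2 / 2 - r) * d δ + c * bInfty)
            * ((M + m * bInfty) * bInfty) := by
        have hfac : Real.exp ((c ^ 2 / 2 - r) * d δ + c * bInfty) * (M + m * bInfty)
              * (bInfty - δ)
            ≤ Real.exp ((c ^ 2 / 2 - r) * d δ + c * bInfty)
              * ((M + m * bInfty) * bInfty) := by
          rw [mul_assoc]
          refine mul_le_mul_of_nonneg_left ?_ (Real.exp_nonneg _)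
          have h4 : (0:ℝ) ≤ M + m * bInfty := by positivity
          nlinarith
        calc c ^ 2 * (Real.exp ((c ^ 2 / 2 - r) * d δ + c * bInfty) * (M + m * bInfty)
              * (bInfty - δ))
            ≤ c ^ 2 * (Real.exp ((c ^ 2 / 2 - r) * d δ + c * bInfty)
                * ((M + m * bInfty) * bInfty)) := mul_le_mul_of_nonneg_left hfac hc2nn
          _ = c ^ 2 * Real.exp ((c ^ 2 / 2 - r) * d δ + c * bInfty)
                * ((M + m * bInfty) * bInfty) := by ring
      calc c ^ 2 * |∫ y in Set.Ioc δ bInfty,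
            Real.exp ((c ^ 2 / 2 - r) * d y + c * y) * (h y - m * y)|
          ≤ c ^ 2 * Real.exp ((c ^ 2 / 2 - r) * d δ + c * bInfty)
              * ((M + m * bInfty) * bInfty) := le_trans h1 h2
        _ < ε / 2 := hBc
    calc |c ^ 2 * ((∫ y in Set.Ioc 0 δ,
          Real.exp ((c ^ 2 / 2 - r) * d y + c * y) * (h y - m * y))
        + ∫ y in Set.Ioc δ bInfty,
            Real.exp ((c ^ 2 / 2 - r) * d y + c * y) * (h y - m * y))|
        ≤ c ^ 2 * |∫ y in Set.Ioc 0 δ,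
            Real.exp ((c ^ 2 / 2 - r) * d y + c * y) * (h y - m * y)|
          + c ^ 2 * |∫ y in Set.Ioc δ bInfty,
              Real.exp ((c ^ 2 / 2 - r) * d y + c * y) * (h y - m * y)| := habs
      _ < ε / 2 + ε / 2 := by linarith
      _ = ε := by ring
  have hfin := hL.add key
  rw [add_zero] at hfin
  have heq : (fun c => F c + (G c - F c)) = G := by
    funext c
    ring
  rwa [heq] at hfin
end

section
/- There is exactly one B > 0 such that ∫_0^∞ z e^{−B z²/2 + z} dz = 1; moreover this unique solution lies in the interval (2.45, 2.46). -/
open MeasureTheory Set Real Filter Nat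

-- Taylor tail bound for exp
lemma exp_le_sum_add {x : ℝ} (hx : 0 ≤ x) (N : ℕ) :
    Real.exp x ≤ (∑ n ∈ Finset.range N, x ^ n / n !) + x ^ N / N ! * Real.exp x := by
  have hs : Summable (fun n : ℕ => x ^ n / n !) := Real.summable_pow_div_factorial x
  have hexp : Real.exp x = ∑' n : ℕ, x ^ n / n ! := by
    rw [Real.exp_eq_exp_ℝ, NormedSpace.exp_eq_tsum_div]
  have hsplit := Summable.sum_add_tsum_nat_add N hs
  have hterm : ∀ i : ℕ, x ^ (i + N) / (i + N)! ≤ x ^ N / N ! * (x ^ i / i !) := by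
    intro i
    have h1 : (i ! * N ! : ℕ) ≤ (i + N)! := Nat.le_of_dvd (Nat.factorial_pos _)
      (Nat.factorial_mul_factorial_dvd_factorial_add i N)
    have h1' : ((i ! : ℝ) * N !) ≤ ((i + N)! : ℝ) := by exact_mod_cast h1
    have hpow : x ^ (i + N) = x ^ N * x ^ i := by rw [pow_add]; ring
    have h1'' : (0:ℝ) < (N ! : ℝ) * i ! := by positivity
    calc x ^ (i + N) / (i + N)! ≤ x ^ (i + N) / ((N !:ℝ) * i !) := by
          apply div_le_div_of_nonneg_left (by positivity) h1''
          rw [mul_comm]; exact h1'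
      _ = x ^ N / N ! * (x ^ i / i !) := by rw [hpow]; field_simp
  have htail : (∑' i : ℕ, x ^ (i + N) / (i + N)!) ≤ x ^ N / N ! * Real.exp x := by
    have hs2 : Summable (fun i : ℕ => x ^ (i + N) / (i + N)!) :=
      (summable_nat_add_iff N).2 hs
    have hs3 : Summable (fun i : ℕ => x ^ N / N ! * (x ^ i / i !)) := hs.mul_left _
    calc (∑' i : ℕ, x ^ (i + N) / (i + N)!) ≤ ∑' i : ℕ, x ^ N / N ! * (x ^ i / i !) :=
          Summable.tsum_le_tsum hterm hs2 hs3
      _ = x ^ N / N ! * Real.exp x := by rw [tsum_mul_left, ← hexp]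
  have : Real.exp x = (∑ n ∈ Finset.range N, x ^ n / n !) + ∑' i : ℕ, x ^ (i + N) / (i + N)! := by
    rw [hexp, ← hsplit]
  linarith [htail, this]

-- Gaussian moments
lemma moment {b : ℝ} (hb : 0 < b) (k : ℕ) :
    ∫ z in Ioi (0:ℝ), z ^ k * Real.exp (-b * z ^ 2) =
      b ^ (-((k:ℝ) + 1) / 2) / 2 * Real.Gamma (((k:ℝ) + 1) / 2) := by
  have h := integral_rpow_mul_exp_neg_mul_rpow (p := 2) (q := (k:ℝ)) (b := b)
    (by norm_num) (lt_of_lt_of_le neg_one_lt_zero (Nat.cast_nonneg k)) hb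
  have heq : ∀ z ∈ Ioi (0:ℝ), z ^ ((k:ℝ)) * Real.exp (-b * z ^ (2:ℝ)) =
      z ^ k * Real.exp (-b * z ^ 2) := by
    intro z hz
    rw [Real.rpow_natCast, show (2:ℝ) = ((2:ℕ):ℝ) by norm_num, Real.rpow_natCast]
  rw [setIntegral_congr_fun measurableSet_Ioi heq] at h
  rw [h]
  ring

lemma momOdd {b : ℝ} (hb : 0 < b) (j : ℕ) :
    ∫ z in Ioi (0:ℝ), z ^ (2*j+1) * Real.exp (-b * z ^ 2) = (j ! : ℝ) / (2 * b ^ (j+1)) := by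
  rw [moment hb]
  have h1 : (-((2*j+1:ℕ):ℝ) - 1) / 2 = -(((j:ℝ)+1)) := by push_cast; ring
  have h2 : b ^ (-(((2*j+1:ℕ):ℝ) + 1) / 2) = (b ^ (j+1))⁻¹ := by
    rw [show (-(((2*j+1:ℕ):ℝ) + 1) / 2) = -(((j+1:ℕ):ℝ)) by push_cast; ring,
      Real.rpow_neg hb.le, Real.rpow_natCast]
  have h3 : Real.Gamma ((((2*j+1:ℕ):ℝ) + 1) / 2) = (j ! : ℝ) := by
    rw [show ((((2*j+1:ℕ):ℝ) + 1) / 2) = ((j:ℝ) + 1) by push_cast; ring,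
      Real.Gamma_nat_eq_factorial]
  rw [h2, h3]
  field_simp

lemma Gamma_nat_add_half (j : ℕ) :
    Real.Gamma ((j:ℝ) + 1/2) = ((2*j)! : ℝ) * Real.sqrt π / (4 ^ j * (j ! : ℝ)) := by
  induction j with
  | zero =>
    simp only [Nat.cast_zero, zero_add, Real.Gamma_one_half_eq, mul_zero, Nat.factorial_zero,
      pow_zero, Nat.cast_one, mul_one, one_mul]
    norm_num
  | succ j ih =>
    have hne : ((j:ℝ) + 1/2) ≠ 0 := by positivity
    have : ((j+1:ℕ):ℝ) + 1/2 = ((j:ℝ) + 1/2) + 1 := by push_cast; ring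
    rw [this, Real.Gamma_add_one hne, ih]
    have h4 : (0:ℝ) < 4 ^ j * (j ! : ℝ) := by positivity
    rw [Nat.factorial_succ, Nat.mul_succ, Nat.factorial_succ, Nat.factorial_succ]
    push_cast
    field_simp
    ring

lemma momEven {b : ℝ} (hb : 0 < b) (j : ℕ) :
    ∫ z in Ioi (0:ℝ), z ^ (2*j) * Real.exp (-b * z ^ 2) =
      ((2*j)! : ℝ) / (4 ^ j * (j ! : ℝ) * 2 * b ^ j) * (Real.sqrt π / Real.sqrt b) := by
  rw [moment hb]
  have h2 : b ^ (-(((2*j:ℕ):ℝ) + 1) / 2) = (b ^ j)⁻¹ * (Real.sqrt b)⁻¹ := by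
    rw [show (-(((2*j:ℕ):ℝ) + 1) / 2) = (-((j:ℕ):ℝ)) + (-(1/2)) by push_cast; ring,
      Real.rpow_add hb, Real.rpow_neg hb.le, Real.rpow_natCast,
      Real.rpow_neg hb.le, ← Real.sqrt_eq_rpow]
  rw [h2, show ((((2*j:ℕ):ℝ) + 1) / 2) = ((j:ℝ) + 1/2) by push_cast; ring, _root_.Gamma_nat_add_half]
  have h4 : (0:ℝ) < 4 ^ j * (j ! : ℝ) := by positivity
  have h5 : (0:ℝ) < Real.sqrt b := Real.sqrt_pos.2 hb
  field_simp

lemma integrableF {B : ℝ} (hB : 0 < B) :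
    IntegrableOn (fun z : ℝ => z * Real.exp (-B * z ^ 2 / 2 + z)) (Ioi (0:ℝ)) := by
  have hg : IntegrableOn (fun z : ℝ => Real.exp (1/B) * (z * Real.exp (-(B/4) * z ^ 2)))
      (Ioi (0:ℝ)) := ((integrable_mul_exp_neg_mul_sq (by positivity : 0 < B/4)).integrableOn).const_mul _
  apply hg.mono'
  · exact (Continuous.aestronglyMeasurable (by continuity)).restrict
  · rw [ae_restrict_iff' measurableSet_Ioi]
    refine Filter.Eventually.of_forall fun z hz => ?_
    have hz' : (0:ℝ) < z := hz
    have hkey : -B * z ^ 2 / 2 + z ≤ 1/B + (-(B/4) * z ^ 2) := by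
      have h1 : z - B * z ^ 2 / 4 ≤ 1/B := by
        rw [le_div_iff₀ hB]
        nlinarith [sq_nonneg (B * z - 2)]
      linarith
    have h2 : z * Real.exp (-B * z ^ 2 / 2 + z) ≤ Real.exp (1/B) * (z * Real.exp (-(B/4) * z ^ 2)) := by
      rw [← mul_assoc, mul_comm (Real.exp (1/B)) z, mul_assoc, ← Real.exp_add]
      exact mul_le_mul_of_nonneg_left (Real.exp_le_exp.2 hkey) hz'.le
    rw [Real.norm_eq_abs, abs_of_nonneg (by positivity)]
    exact h2

lemma F_strict_anti {a c : ℝ} (ha : 0 < a) (hac : a < c) :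
    (∫ z in Ioi (0:ℝ), z * Real.exp (-c * z ^ 2 / 2 + z)) <
      ∫ z in Ioi (0:ℝ), z * Real.exp (-a * z ^ 2 / 2 + z) := by
  have hc : 0 < c := ha.trans hac
  have hia := integrableF ha
  have hic := integrableF hc
  have hdiff : (0:ℝ) < ∫ z in Ioi (0:ℝ),
      (z * Real.exp (-a * z ^ 2 / 2 + z) - z * Real.exp (-c * z ^ 2 / 2 + z)) := by
    set g : ℝ → ℝ := fun z => z * Real.exp (-a * z ^ 2 / 2 + z) - z * Real.exp (-c * z ^ 2 / 2 + z)
      with hg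
    have hpos : ∀ z ∈ Ioi (0:ℝ), 0 < g z := by
      intro z hz
      have hz' : (0:ℝ) < z := hz
      have : Real.exp (-c * z ^ 2 / 2 + z) < Real.exp (-a * z ^ 2 / 2 + z) := by
        apply Real.exp_lt_exp.2
        nlinarith [sq_nonneg z, mul_pos hz' hz']
      simp only [hg]
      nlinarith
    rw [integral_pos_iff_support_of_nonneg_ae]
    · rw [Measure.restrict_apply' measurableSet_Ioi]
      have hsub : Ioi (0:ℝ) ⊆ Function.support g := fun z hz => (hpos z hz).ne'
      rw [Set.inter_eq_self_of_subset_right hsub, Real.volume_Ioi]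
      exact ENNReal.zero_lt_top
    · rw [Filter.EventuallyLE, ae_restrict_iff' measurableSet_Ioi]
      exact Filter.Eventually.of_forall fun z hz => (hpos z hz).le
    · exact hia.sub hic
  rw [integral_sub hia hic] at hdiff
  linarith

lemma F_contAt {B₀ : ℝ} (hB₀ : 2 < B₀) :
    ContinuousAt (fun B : ℝ => ∫ z in Ioi (0:ℝ), z * Real.exp (-B * z ^ 2 / 2 + z)) B₀ := by
  have hbound : IntegrableOn (fun z : ℝ => Real.exp 1 * (z * Real.exp (-(1/2) * z ^ 2)))
      (Ioi (0:ℝ)) := ((integrable_mul_exp_neg_mul_sq (by norm_num : (0:ℝ) < 1/2)).integrableOn).const_mul _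
  apply MeasureTheory.continuousAt_of_dominated (bound := fun z => Real.exp 1 * (z * Real.exp (-(1/2) * z ^ 2)))
  · exact Filter.Eventually.of_forall fun B =>
      (Continuous.aestronglyMeasurable (by continuity)).restrict
  · have hev : ∀ᶠ B in nhds B₀, B ∈ Ioi (2:ℝ) := isOpen_Ioi.eventually_mem hB₀
    refine hev.mono fun B hB => ?_
    rw [ae_restrict_iff' measurableSet_Ioi]
    refine Filter.Eventually.of_forall fun z hz => ?_
    have hz' : (0:ℝ) < z := hz
    have hB' : (2:ℝ) < B := hB
    have hkey : -B * z ^ 2 / 2 + z ≤ 1 + (-(1/2) * z ^ 2) := by nlinarith [sq_nonneg (z - 1)]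
    rw [Real.norm_eq_abs, abs_of_nonneg (by positivity)]
    rw [← mul_assoc, mul_comm (Real.exp 1) z, mul_assoc, ← Real.exp_add]
    exact mul_le_mul_of_nonneg_left (Real.exp_le_exp.2 hkey) hz'.le
  · exact hbound
  · refine Filter.Eventually.of_forall fun z => ?_
    have : Continuous fun B : ℝ => z * Real.exp (-B * z ^ 2 / 2 + z) := by continuity
    exact this.continuousAt

lemma q_lb : (1.60142:ℝ) < Real.sqrt π / Real.sqrt (49/40) := by
  rw [← Real.sqrt_div pi_pos.le]
  rw [show (1.60142:ℝ) = 1.60142 from rfl]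
  have h : (1.60142:ℝ)^2 < π / (49/40) := by
    rw [lt_div_iff₀ (by norm_num : (0:ℝ) < 49/40)]
    nlinarith [Real.pi_gt_d6]
  exact (Real.lt_sqrt (by norm_num)).2 h

lemma F_lower : (1:ℝ) < ∫ z in Ioi (0:ℝ), z * Real.exp (-(49/20) * z ^ 2 / 2 + z) := by
  have hb : (0:ℝ) < 49/40 := by norm_num
  set S : ℝ := ∑ n ∈ Finset.range 13,
      (∫ z in Ioi (0:ℝ), z ^ (n+1) * Real.exp (-(49/40) * z ^ 2)) / (n ! : ℝ) with hS
  have hgint : ∀ n : ℕ, IntegrableOn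
      (fun z : ℝ => z ^ (n+1) * Real.exp (-(49/40) * z ^ 2) / (n ! : ℝ)) (Ioi (0:ℝ)) := by
    intro n
    have h := (integrableOn_rpow_mul_exp_neg_mul_sq hb
      (s := ((n:ℝ)+1)) (lt_of_lt_of_le neg_one_lt_zero (by positivity))).div_const ((n ! : ℝ))
    apply MeasureTheory.IntegrableOn.congr_fun h _ measurableSet_Ioi
    intro z hz
    simp only [show ((n:ℝ)+1) = (((n+1:ℕ)):ℝ) by push_cast; ring, Real.rpow_natCast]
  have hmono : S ≤ ∫ z in Ioi (0:ℝ), z * Real.exp (-(49/20) * z ^ 2 / 2 + z) := by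
    rw [hS]
    rw [show (∑ n ∈ Finset.range 13,
        (∫ z in Ioi (0:ℝ), z ^ (n+1) * Real.exp (-(49/40) * z ^ 2)) / (n ! : ℝ)) =
        ∑ n ∈ Finset.range 13,
        (∫ z in Ioi (0:ℝ), z ^ (n+1) * Real.exp (-(49/40) * z ^ 2) / (n ! : ℝ)) from
      Finset.sum_congr rfl fun n _ => (integral_div _ _).symm]
    rw [← integral_finset_sum _ (fun n _ => hgint n)]
    apply setIntegral_mono_on (integrable_finset_sum _ (fun n _ => hgint n))
      (integrableF (by norm_num)) measurableSet_Ioi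
    intro z hz
    have hz' : (0:ℝ) < z := hz
    have hsum : (∑ n ∈ Finset.range 13, z ^ (n+1) * Real.exp (-(49/40) * z ^ 2) / (n ! : ℝ)) =
        (∑ n ∈ Finset.range 13, z ^ n / (n ! : ℝ)) * (z * Real.exp (-(49/40) * z ^ 2)) := by
      rw [Finset.sum_mul]
      refine Finset.sum_congr rfl fun n _ => ?_
      rw [pow_succ]
      ring
    rw [hsum]
    have h1 : (∑ n ∈ Finset.range 13, z ^ n / (n ! : ℝ)) ≤ Real.exp z :=
      Real.sum_le_exp_of_nonneg hz'.le 13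
    have h2 : (0:ℝ) ≤ z * Real.exp (-(49/40) * z ^ 2) := by positivity
    calc (∑ n ∈ Finset.range 13, z ^ n / (n ! : ℝ)) * (z * Real.exp (-(49/40) * z ^ 2))
        ≤ Real.exp z * (z * Real.exp (-(49/40) * z ^ 2)) := mul_le_mul_of_nonneg_right h1 h2
      _ = z * Real.exp (-(49/20) * z ^ 2 / 2 + z) := by
          rw [mul_comm (Real.exp z), mul_assoc, ← Real.exp_add]
          congr 2
          ring
  have h1 : (1:ℝ) < S := by
    have m1 : (∫ z in Ioi (0:ℝ), z ^ (0+1) * Real.exp (-(49/40) * z ^ 2))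
        = ((0:ℕ) ! : ℝ) / (2 * (49/40) ^ (0+1)) := momOdd hb 0
    have m2 : (∫ z in Ioi (0:ℝ), z ^ (1+1) * Real.exp (-(49/40) * z ^ 2))
        = (((2:ℕ)) ! : ℝ) / (4 ^ 1 * ((1:ℕ) ! : ℝ) * 2 * (49/40) ^ 1) * (Real.sqrt π / Real.sqrt (49/40)) := momEven hb 1
    have m3 : (∫ z in Ioi (0:ℝ), z ^ (2+1) * Real.exp (-(49/40) * z ^ 2))
        = ((1:ℕ) ! : ℝ) / (2 * (49/40) ^ (1+1)) := momOdd hb 1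
    have m4 : (∫ z in Ioi (0:ℝ), z ^ (3+1) * Real.exp (-(49/40) * z ^ 2))
        = (((4:ℕ)) ! : ℝ) / (4 ^ 2 * ((2:ℕ) ! : ℝ) * 2 * (49/40) ^ 2) * (Real.sqrt π / Real.sqrt (49/40)) := momEven hb 2
    have m5 : (∫ z in Ioi (0:ℝ), z ^ (4+1) * Real.exp (-(49/40) * z ^ 2))
        = ((2:ℕ) ! : ℝ) / (2 * (49/40) ^ (2+1)) := momOdd hb 2
    have m6 : (∫ z in Ioi (0:ℝ), z ^ (5+1) * Real.exp (-(49/40) * z ^ 2))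
        = (((6:ℕ)) ! : ℝ) / (4 ^ 3 * ((3:ℕ) ! : ℝ) * 2 * (49/40) ^ 3) * (Real.sqrt π / Real.sqrt (49/40)) := momEven hb 3
    have m7 : (∫ z in Ioi (0:ℝ), z ^ (6+1) * Real.exp (-(49/40) * z ^ 2))
        = ((3:ℕ) ! : ℝ) / (2 * (49/40) ^ (3+1)) := momOdd hb 3
    have m8 : (∫ z in Ioi (0:ℝ), z ^ (7+1) * Real.exp (-(49/40) * z ^ 2))
        = (((8:ℕ)) ! : ℝ) / (4 ^ 4 * ((4:ℕ) ! : ℝ) * 2 * (49/40) ^ 4) * (Real.sqrt π / Real.sqrt (49/40)) := momEven hb 4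
    have m9 : (∫ z in Ioi (0:ℝ), z ^ (8+1) * Real.exp (-(49/40) * z ^ 2))
        = ((4:ℕ) ! : ℝ) / (2 * (49/40) ^ (4+1)) := momOdd hb 4
    have m10 : (∫ z in Ioi (0:ℝ), z ^ (9+1) * Real.exp (-(49/40) * z ^ 2))
        = (((10:ℕ)) ! : ℝ) / (4 ^ 5 * ((5:ℕ) ! : ℝ) * 2 * (49/40) ^ 5) * (Real.sqrt π / Real.sqrt (49/40)) := momEven hb 5
    have m11 : (∫ z in Ioi (0:ℝ), z ^ (10+1) * Real.exp (-(49/40) * z ^ 2))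
        = ((5:ℕ) ! : ℝ) / (2 * (49/40) ^ (5+1)) := momOdd hb 5
    have m12 : (∫ z in Ioi (0:ℝ), z ^ (11+1) * Real.exp (-(49/40) * z ^ 2))
        = (((12:ℕ)) ! : ℝ) / (4 ^ 6 * ((6:ℕ) ! : ℝ) * 2 * (49/40) ^ 6) * (Real.sqrt π / Real.sqrt (49/40)) := momEven hb 6
    have m13 : (∫ z in Ioi (0:ℝ), z ^ (12+1) * Real.exp (-(49/40) * z ^ 2))
        = ((6:ℕ) ! : ℝ) / (2 * (49/40) ^ (6+1)) := momOdd hb 6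
    rw [hS]
    simp only [Finset.sum_range_succ, Finset.sum_range_zero, zero_add]
    rw [m1, m2, m3, m4, m5, m6, m7, m8, m9, m10, m11, m12, m13]
    have hq := q_lb
    set q := Real.sqrt π / Real.sqrt (49/40) with hqdef
    norm_num [Nat.factorial]
    linarith [hq]
  linarith

lemma q2_ub : Real.sqrt π / Real.sqrt (123/100) < (1.59817:ℝ) := by
  rw [← Real.sqrt_div pi_pos.le]
  have h : π / (123/100) < (1.59817:ℝ)^2 := by
    rw [div_lt_iff₀ (by norm_num : (0:ℝ) < 123/100)]
    nlinarith [Real.pi_lt_d6]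
  exact (Real.sqrt_lt' (by norm_num)).2 h

lemma q3_ub : Real.sqrt π / Real.sqrt (49/50) < (1.790449:ℝ) := by
  rw [← Real.sqrt_div pi_pos.le]
  have h : π / (49/50) < (1.790449:ℝ)^2 := by
    rw [div_lt_iff₀ (by norm_num : (0:ℝ) < 49/50)]
    nlinarith [Real.pi_lt_d6]
  exact (Real.sqrt_lt' (by norm_num)).2 h

lemma q2_pos : (0:ℝ) < Real.sqrt π / Real.sqrt (123/100) := by positivity
lemma q3_pos : (0:ℝ) < Real.sqrt π / Real.sqrt (49/50) := by positivity

lemma F_upper : (∫ z in Ioi (0:ℝ), z * Real.exp (-(123/50) * z ^ 2 / 2 + z)) < 1 := by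
  have hb : (0:ℝ) < 123/100 := by norm_num
  have hb' : (0:ℝ) < 49/50 := by norm_num
  -- integrability of each sum term
  have hgint : ∀ n : ℕ, IntegrableOn
      (fun z : ℝ => z ^ (n+1) * Real.exp (-(123/100) * z ^ 2) / (n ! : ℝ)) (Ioi (0:ℝ)) := by
    intro n
    have h := (integrableOn_rpow_mul_exp_neg_mul_sq hb
      (s := ((n:ℝ)+1)) (lt_of_lt_of_le neg_one_lt_zero (by positivity))).div_const ((n ! : ℝ))
    apply MeasureTheory.IntegrableOn.congr_fun h _ measurableSet_Ioi
    intro z hz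
    simp only [show ((n:ℝ)+1) = (((n+1:ℕ)):ℝ) by push_cast; ring, Real.rpow_natCast]
  have htint : IntegrableOn
      (fun z : ℝ => 2.7182818286 * (z ^ 14 * Real.exp (-(49/50) * z ^ 2)) / (13 ! : ℝ))
      (Ioi (0:ℝ)) := by
    have h := (((integrableOn_rpow_mul_exp_neg_mul_sq hb'
      (s := (14:ℝ)) (by norm_num)).const_mul (2.7182818286:ℝ)).div_const ((13 ! : ℝ)))
    apply MeasureTheory.IntegrableOn.congr_fun h _ measurableSet_Ioi
    intro z hz
    simp only [show ((14:ℝ)) = (((14:ℕ)):ℝ) by push_cast; ring, Real.rpow_natCast]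
  set RHS : ℝ → ℝ := fun z =>
    (∑ n ∈ Finset.range 13, z ^ (n+1) * Real.exp (-(123/100) * z ^ 2) / (n ! : ℝ)) +
      2.7182818286 * (z ^ 14 * Real.exp (-(49/50) * z ^ 2)) / (13 ! : ℝ) with hRHS
  have hRHSint : IntegrableOn RHS (Ioi (0:ℝ)) :=
    (integrable_finset_sum _ (fun n _ => hgint n)).add htint
  have hmono : (∫ z in Ioi (0:ℝ), z * Real.exp (-(123/50) * z ^ 2 / 2 + z)) ≤
      ∫ z in Ioi (0:ℝ), RHS z := by
    apply setIntegral_mono_on (integrableF (by norm_num)) hRHSint measurableSet_Ioi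
    intro z hz
    have hz' : (0:ℝ) < z := hz
    have hexp : Real.exp z ≤ (∑ n ∈ Finset.range 13, z ^ n / (n ! : ℝ))
        + z ^ 13 / (13 ! : ℝ) * Real.exp z := exp_le_sum_add hz'.le 13
    have step1 : z * Real.exp (-(123/50) * z ^ 2 / 2 + z) =
        (z * Real.exp (-(123/100) * z ^ 2)) * Real.exp z := by
      rw [mul_assoc, ← Real.exp_add]
      congr 2
      ring
    have step2 : (z * Real.exp (-(123/100) * z ^ 2)) * Real.exp z ≤
        (z * Real.exp (-(123/100) * z ^ 2)) *
          ((∑ n ∈ Finset.range 13, z ^ n / (n ! : ℝ)) + z ^ 13 / (13 ! : ℝ) * Real.exp z) :=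
      mul_le_mul_of_nonneg_left hexp (by positivity)
    have hsum : (z * Real.exp (-(123/100) * z ^ 2)) * (∑ n ∈ Finset.range 13, z ^ n / (n ! : ℝ)) =
        ∑ n ∈ Finset.range 13, z ^ (n+1) * Real.exp (-(123/100) * z ^ 2) / (n ! : ℝ) := by
      rw [Finset.mul_sum]
      refine Finset.sum_congr rfl fun n _ => ?_
      rw [pow_succ]
      ring
    have htail : (z * Real.exp (-(123/100) * z ^ 2)) * (z ^ 13 / (13 ! : ℝ) * Real.exp z) ≤
        2.7182818286 * (z ^ 14 * Real.exp (-(49/50) * z ^ 2)) / (13 ! : ℝ) := by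
      have hkey : -(123/100) * z ^ 2 + z ≤ 1 + (-(49/50) * z ^ 2) := by
        nlinarith [sq_nonneg (z - 2)]
      have h1 : z ^ 14 * Real.exp (-(123/100) * z ^ 2 + z) ≤
          z ^ 14 * (Real.exp 1 * Real.exp (-(49/50) * z ^ 2)) := by
        rw [← Real.exp_add]
        exact mul_le_mul_of_nonneg_left (Real.exp_le_exp.2 hkey) (by positivity)
      have h2 : z ^ 14 * (Real.exp 1 * Real.exp (-(49/50) * z ^ 2)) ≤
          z ^ 14 * (2.7182818286 * Real.exp (-(49/50) * z ^ 2)) := by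
        apply mul_le_mul_of_nonneg_left _ (by positivity)
        exact mul_le_mul_of_nonneg_right Real.exp_one_lt_d9.le (Real.exp_pos _).le
      have h3 : (z * Real.exp (-(123/100) * z ^ 2)) * (z ^ 13 / (13 ! : ℝ) * Real.exp z) =
          z ^ 14 * Real.exp (-(123/100) * z ^ 2 + z) / (13 ! : ℝ) := by
        rw [Real.exp_add, pow_succ, pow_succ]
        ring_nf
      rw [h3]
      have hfac : (0:ℝ) < (13 ! : ℝ) := by positivity
      rw [div_le_div_iff₀ hfac hfac]
      calc z ^ 14 * Real.exp (-(123/100) * z ^ 2 + z) * ↑13 ! ≤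
            z ^ 14 * (2.7182818286 * Real.exp (-(49/50) * z ^ 2)) * ↑13 ! := by
            apply mul_le_mul_of_nonneg_right (h1.trans h2) hfac.le
        _ = 2.7182818286 * (z ^ 14 * Real.exp (-(49/50) * z ^ 2)) * ↑13 ! := by ring
    calc z * Real.exp (-(123/50) * z ^ 2 / 2 + z)
        ≤ (z * Real.exp (-(123/100) * z ^ 2)) *
          ((∑ n ∈ Finset.range 13, z ^ n / (n ! : ℝ)) + z ^ 13 / (13 ! : ℝ) * Real.exp z) := by
          rw [step1]; exact step2
      _ = (z * Real.exp (-(123/100) * z ^ 2)) * (∑ n ∈ Finset.range 13, z ^ n / (n ! : ℝ))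
          + (z * Real.exp (-(123/100) * z ^ 2)) * (z ^ 13 / (13 ! : ℝ) * Real.exp z) := by ring
      _ ≤ RHS z := by
          rw [hRHS]
          simp only
          rw [hsum]
          exact add_le_add_right htail _
  have hval : (∫ z in Ioi (0:ℝ), RHS z) < 1 := by
    rw [hRHS]
    rw [integral_add (integrable_finset_sum _ (fun n _ => hgint n)) htint]
    rw [integral_finset_sum _ (fun n _ => hgint n)]
    have hsplit : ∀ n : ℕ, (∫ z in Ioi (0:ℝ), z ^ (n+1) * Real.exp (-(123/100) * z ^ 2) / (n ! : ℝ))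
        = (∫ z in Ioi (0:ℝ), z ^ (n+1) * Real.exp (-(123/100) * z ^ 2)) / (n ! : ℝ) :=
      fun n => integral_div _ _
    simp only [hsplit]
    have htval : (∫ z in Ioi (0:ℝ), 2.7182818286 * (z ^ 14 * Real.exp (-(49/50) * z ^ 2)) / (13 ! : ℝ))
        = 2.7182818286 * (∫ z in Ioi (0:ℝ), z ^ 14 * Real.exp (-(49/50) * z ^ 2)) / (13 ! : ℝ) := by
      rw [integral_div, integral_const_mul]
    rw [htval]
    have mt : (∫ z in Ioi (0:ℝ), z ^ 14 * Real.exp (-(49/50) * z ^ 2))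
        = (((14:ℕ)) ! : ℝ) / (4 ^ 7 * ((7:ℕ) ! : ℝ) * 2 * (49/50) ^ 7) * (Real.sqrt π / Real.sqrt (49/50)) := momEven hb' 7
    have m1 : (∫ z in Ioi (0:ℝ), z ^ (0+1) * Real.exp (-(123/100) * z ^ 2))
        = ((0:ℕ) ! : ℝ) / (2 * (123/100) ^ (0+1)) := momOdd hb 0
    have m2 : (∫ z in Ioi (0:ℝ), z ^ (1+1) * Real.exp (-(123/100) * z ^ 2))
        = (((2:ℕ)) ! : ℝ) / (4 ^ 1 * ((1:ℕ) ! : ℝ) * 2 * (123/100) ^ 1) * (Real.sqrt π / Real.sqrt (123/100)) := momEven hb 1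
    have m3 : (∫ z in Ioi (0:ℝ), z ^ (2+1) * Real.exp (-(123/100) * z ^ 2))
        = ((1:ℕ) ! : ℝ) / (2 * (123/100) ^ (1+1)) := momOdd hb 1
    have m4 : (∫ z in Ioi (0:ℝ), z ^ (3+1) * Real.exp (-(123/100) * z ^ 2))
        = (((4:ℕ)) ! : ℝ) / (4 ^ 2 * ((2:ℕ) ! : ℝ) * 2 * (123/100) ^ 2) * (Real.sqrt π / Real.sqrt (123/100)) := momEven hb 2
    have m5 : (∫ z in Ioi (0:ℝ), z ^ (4+1) * Real.exp (-(123/100) * z ^ 2))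
        = ((2:ℕ) ! : ℝ) / (2 * (123/100) ^ (2+1)) := momOdd hb 2
    have m6 : (∫ z in Ioi (0:ℝ), z ^ (5+1) * Real.exp (-(123/100) * z ^ 2))
        = (((6:ℕ)) ! : ℝ) / (4 ^ 3 * ((3:ℕ) ! : ℝ) * 2 * (123/100) ^ 3) * (Real.sqrt π / Real.sqrt (123/100)) := momEven hb 3
    have m7 : (∫ z in Ioi (0:ℝ), z ^ (6+1) * Real.exp (-(123/100) * z ^ 2))
        = ((3:ℕ) ! : ℝ) / (2 * (123/100) ^ (3+1)) := momOdd hb 3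
    have m8 : (∫ z in Ioi (0:ℝ), z ^ (7+1) * Real.exp (-(123/100) * z ^ 2))
        = (((8:ℕ)) ! : ℝ) / (4 ^ 4 * ((4:ℕ) ! : ℝ) * 2 * (123/100) ^ 4) * (Real.sqrt π / Real.sqrt (123/100)) := momEven hb 4
    have m9 : (∫ z in Ioi (0:ℝ), z ^ (8+1) * Real.exp (-(123/100) * z ^ 2))
        = ((4:ℕ) ! : ℝ) / (2 * (123/100) ^ (4+1)) := momOdd hb 4
    have m10 : (∫ z in Ioi (0:ℝ), z ^ (9+1) * Real.exp (-(123/100) * z ^ 2))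
        = (((10:ℕ)) ! : ℝ) / (4 ^ 5 * ((5:ℕ) ! : ℝ) * 2 * (123/100) ^ 5) * (Real.sqrt π / Real.sqrt (123/100)) := momEven hb 5
    have m11 : (∫ z in Ioi (0:ℝ), z ^ (10+1) * Real.exp (-(123/100) * z ^ 2))
        = ((5:ℕ) ! : ℝ) / (2 * (123/100) ^ (5+1)) := momOdd hb 5
    have m12 : (∫ z in Ioi (0:ℝ), z ^ (11+1) * Real.exp (-(123/100) * z ^ 2))
        = (((12:ℕ)) ! : ℝ) / (4 ^ 6 * ((6:ℕ) ! : ℝ) * 2 * (123/100) ^ 6) * (Real.sqrt π / Real.sqrt (123/100)) := momEven hb 6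
    have m13 : (∫ z in Ioi (0:ℝ), z ^ (12+1) * Real.exp (-(123/100) * z ^ 2))
        = ((6:ℕ) ! : ℝ) / (2 * (123/100) ^ (6+1)) := momOdd hb 6
    simp only [Finset.sum_range_succ, Finset.sum_range_zero, zero_add]
    rw [m1, m2, m3, m4, m5, m6, m7, m8, m9, m10, m11, m12, m13, mt]
    have hq2 := q2_ub
    have hq3 := q3_ub
    have hq2p := q2_pos
    have hq3p := q3_pos
    set q2 := Real.sqrt π / Real.sqrt (123/100) with hq2def
    set q3 := Real.sqrt π / Real.sqrt (49/50) with hq3def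
    norm_num [Nat.factorial]
    linarith [hq2, hq3]
  linarith

theorem stmt10 :
    ∃ B : ℝ, B ∈ Set.Ioo (2.45 : ℝ) 2.46 ∧
      (∫ z in Set.Ioi (0 : ℝ), z * Real.exp (-B * z ^ 2 / 2 + z)) = 1 ∧
      ∀ B' : ℝ, 0 < B' →
        (∫ z in Set.Ioi (0 : ℝ), z * Real.exp (-B' * z ^ 2 / 2 + z)) = 1 → B' = B := by
  set F : ℝ → ℝ := fun B => ∫ z in Set.Ioi (0 : ℝ), z * Real.exp (-B * z ^ 2 / 2 + z) with hF
  have h245 : (2.45:ℝ) = 49/20 := by norm_num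
  have h246 : (2.46:ℝ) = 123/50 := by norm_num
  have hFlow : 1 < F 2.45 := by rw [hF]; simp only; rw [h245]; exact F_lower
  have hFup : F 2.46 < 1 := by rw [hF]; simp only; rw [h246]; exact F_upper
  have hcont : ContinuousOn F (Set.Icc (2.45:ℝ) 2.46) := by
    intro B hB
    have : 2 < B := by have := hB.1; norm_num at this ⊢; linarith
    exact (F_contAt this).continuousWithinAt
  have hmem : (1:ℝ) ∈ Set.Icc (F 2.46) (F 2.45) := ⟨hFup.le, hFlow.le⟩
  obtain ⟨B, hBmem, hBval⟩ := intermediate_value_Icc' (by norm_num : (2.45:ℝ) ≤ 2.46) hcont hmem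
  have hanti : ∀ a c : ℝ, 0 < a → a < c → F c < F a := by
    intro a c ha hac
    exact F_strict_anti ha hac
  have hBpos : (0:ℝ) < B := by have := hBmem.1; norm_num at this ⊢; linarith
  have hne1 : B ≠ 2.45 := by
    intro h
    rw [h] at hBval
    exact absurd hBval (by linarith)
  have hne2 : B ≠ 2.46 := by
    intro h
    rw [h] at hBval
    exact absurd hBval (by linarith)
  refine ⟨B, ⟨lt_of_le_of_ne hBmem.1 (Ne.symm hne1), lt_of_le_of_ne hBmem.2 hne2⟩, hBval, ?_⟩
  intro B' hB' hval'
  by_contra hne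
  have hfb : F B' = 1 := hval'
  rcases lt_or_gt_of_ne hne with h | h
  · have := hanti B' B hB' h
    rw [hBval, hfb] at this
    exact lt_irrefl _ this
  · have := hanti B B' hBpos h
    rw [hBval, hfb] at this
    exact lt_irrefl _ this
end

section
/- For every β ≥ 0 and every ρ > 0 there is exactly one B > 0 such that ∫_0^∞ z^β e^{−B z²/2 + z} dz = ρ·Γ(β + 1), where Γ denotes the Gamma function. -/
open MeasureTheory Real Set Filter

noncomputable def Fb (β B : ℝ) : ℝ := ∫ z in Set.Ioi (0:ℝ), z ^ β * Real.exp (-B * z ^ 2 / 2 + z)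

lemma meas_fb (β B : ℝ) : Measurable (fun z : ℝ => z ^ β * Real.exp (-B * z ^ 2 / 2 + z)) := by
  fun_prop

lemma int_fb (β : ℝ) (hβ : 0 ≤ β) {B : ℝ} (hB : 0 < B) :
    IntegrableOn (fun z : ℝ => z ^ β * Real.exp (-B * z ^ 2 / 2 + z)) (Set.Ioi 0) := by
  have hB4 : 0 < B / 4 := by linarith
  have hint : IntegrableOn (fun z : ℝ => Real.exp (1/B) * (z ^ β * Real.exp (-(B/4) * z ^ 2))) (Set.Ioi 0) :=
    (integrableOn_rpow_mul_exp_neg_mul_sq hB4 (by linarith)).const_mul _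
  refine Integrable.mono' hint (meas_fb β B).aestronglyMeasurable ?_
  refine (ae_restrict_iff' measurableSet_Ioi).2 (Filter.Eventually.of_forall fun z hz => ?_)
  have hz0 : (0:ℝ) < z := hz
  have hBinv : B * (1/B) = 1 := mul_one_div_cancel hB.ne'
  have key : -B * z ^ 2 / 2 + z ≤ -(B/4) * z ^ 2 + 1/B := by
    nlinarith [sq_nonneg (B * z - 2), hB]
  have h1 : 0 < z ^ β := Real.rpow_pos_of_pos hz0 β
  rw [Real.norm_eq_abs, abs_of_nonneg (by positivity)]
  calc z ^ β * Real.exp (-B * z ^ 2 / 2 + z) ≤ z ^ β * Real.exp (-(B/4) * z ^ 2 + 1/B) := by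
        exact mul_le_mul_of_nonneg_left (Real.exp_le_exp.2 key) h1.le
    _ = Real.exp (1/B) * (z ^ β * Real.exp (-(B/4) * z ^ 2)) := by
        rw [Real.exp_add]; ring

lemma anti_fb (β : ℝ) (hβ : 0 ≤ β) : StrictAntiOn (Fb β) (Set.Ioi 0) := by
  intro B1 hB1 B2 hB2 h12
  have hB1' : (0:ℝ) < B1 := hB1
  have hB2' : (0:ℝ) < B2 := hB2
  have hsub : 0 < ∫ z in Set.Ioi (0:ℝ),
      (z ^ β * Real.exp (-B1 * z ^ 2 / 2 + z) - z ^ β * Real.exp (-B2 * z ^ 2 / 2 + z)) := by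
    rw [setIntegral_pos_iff_support_of_nonneg_ae]
    · refine lt_of_lt_of_le ?_ (measure_mono (inter_subset_inter_left _ (subset_refl _)))
      · show 0 < volume (Function.support _ ∩ Set.Ioi 0)
        have : Function.support (fun z : ℝ =>
            z ^ β * Real.exp (-B1 * z ^ 2 / 2 + z) - z ^ β * Real.exp (-B2 * z ^ 2 / 2 + z))
            ∩ Set.Ioi 0 = Set.Ioi 0 := by
          apply inter_eq_right.2
          intro z hz
          have hz0 : (0:ℝ) < z := hz
          have h1 : 0 < z ^ β := Real.rpow_pos_of_pos hz0 β
          have : Real.exp (-B2 * z ^ 2 / 2 + z) < Real.exp (-B1 * z ^ 2 / 2 + z) := by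
            apply Real.exp_lt_exp.2; nlinarith [sq_nonneg z, pow_pos hz0 2]
          simp only [Function.mem_support]
          nlinarith
        rw [this]
        simp
    · refine (ae_restrict_iff' measurableSet_Ioi).2 (Filter.Eventually.of_forall fun z hz => ?_)
      have hz0 : (0:ℝ) < z := hz
      have h1 : 0 < z ^ β := Real.rpow_pos_of_pos hz0 β
      have : Real.exp (-B2 * z ^ 2 / 2 + z) ≤ Real.exp (-B1 * z ^ 2 / 2 + z) := by
        apply Real.exp_le_exp.2; nlinarith [pow_pos hz0 2]
      simp only [Pi.zero_apply]
      nlinarith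
    · exact (int_fb β hβ hB1').sub (int_fb β hβ hB2')
  have := integral_sub (int_fb β hβ hB1') (int_fb β hβ hB2')
  unfold Fb
  rw [← sub_pos]
  rw [← this] at *
  exact hsub

lemma cont_fb (β : ℝ) (hβ : 0 ≤ β) {B0 : ℝ} (hB0 : 0 < B0) : ContinuousAt (Fb β) B0 := by
  have hhalf : 0 < B0 / 2 := by linarith
  apply MeasureTheory.continuousAt_of_dominated
    (bound := fun z : ℝ => z ^ β * Real.exp (-(B0/2) * z ^ 2 / 2 + z))
  · exact Filter.Eventually.of_forall fun B => (meas_fb β B).aestronglyMeasurable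
  · have hev : ∀ᶠ B in nhds B0, B ∈ Set.Ioi (B0/2) := isOpen_Ioi.eventually_mem (by simpa using hhalf)
    refine hev.mono fun B hB => ?_
    refine (ae_restrict_iff' measurableSet_Ioi).2 (Filter.Eventually.of_forall fun z hz => ?_)
    have hz0 : (0:ℝ) < z := hz
    have h1 : 0 < z ^ β := Real.rpow_pos_of_pos hz0 β
    have hBgt : B0/2 < B := hB
    rw [Real.norm_eq_abs, abs_of_nonneg (by positivity)]
    apply mul_le_mul_of_nonneg_left _ h1.le
    apply Real.exp_le_exp.2
    nlinarith [pow_pos hz0 2]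
  · exact int_fb β hβ hhalf
  · exact Filter.Eventually.of_forall fun z => (by fun_prop : Continuous fun B : ℝ => z ^ β * Real.exp (-B * z ^ 2 / 2 + z)).continuousAt

lemma top_fb (β : ℝ) (hβ : 0 ≤ β) : Tendsto (Fb β) atTop (nhds 0) := by
  have h0 : (0:ℝ) = ∫ z in Set.Ioi (0:ℝ), (0:ℝ) := by simp
  rw [h0]
  apply MeasureTheory.tendsto_integral_filter_of_dominated_convergence
    (bound := fun z : ℝ => z ^ β * Real.exp (-(1:ℝ) * z ^ 2 / 2 + z))
  · exact Filter.Eventually.of_forall fun B => (meas_fb β B).aestronglyMeasurable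
  · filter_upwards [eventually_ge_atTop (1:ℝ)] with B hB
    refine (ae_restrict_iff' measurableSet_Ioi).2 (Filter.Eventually.of_forall fun z hz => ?_)
    have hz0 : (0:ℝ) < z := hz
    have h1 : 0 < z ^ β := Real.rpow_pos_of_pos hz0 β
    rw [Real.norm_eq_abs, abs_of_nonneg (by positivity)]
    apply mul_le_mul_of_nonneg_left _ h1.le
    apply Real.exp_le_exp.2
    nlinarith [pow_pos hz0 2]
  · exact int_fb β hβ one_pos
  · refine (ae_restrict_iff' measurableSet_Ioi).2 (Filter.Eventually.of_forall fun z hz => ?_)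
    have hz0 : (0:ℝ) < z := hz
    have hexp : Tendsto (fun B : ℝ => -B * z ^ 2 / 2 + z) atTop atBot := by
      apply tendsto_atBot_add_const_right
      have : Tendsto (fun B : ℝ => B * (-(z ^ 2) / 2)) atTop atBot :=
        Tendsto.atTop_mul_const_of_neg (by nlinarith [pow_pos hz0 2]) tendsto_id
      convert this using 2 with B
      ring
    have := (Real.tendsto_exp_atBot.comp hexp).const_mul (z ^ β)
    simpa using this

lemma bot_fb (β : ℝ) (hβ : 0 ≤ β) : Tendsto (Fb β) (nhdsWithin 0 (Set.Ioi 0)) atTop := by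
  rw [tendsto_atTop]
  intro M
  set N : ℝ := Real.log (Real.exp 1 + 2 * |M| + 2) with hN
  have hargpos : (0:ℝ) < Real.exp 1 + 2 * |M| + 2 := by positivity
  have hexpN : Real.exp N = Real.exp 1 + 2 * |M| + 2 := Real.exp_log hargpos
  have hN1 : 1 < N := by
    have := Real.exp_lt_exp (x := 1) (y := N)
    rw [hexpN] at this
    have h2 : Real.exp 1 < Real.exp 1 + 2 * |M| + 2 := by nlinarith [abs_nonneg M]
    exact this.1 h2
  have hNpos : 0 < N := by linarith
  set δ : ℝ := 2 * Real.log 2 / N ^ 2 with hδ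
  have hδpos : 0 < δ := by
    exact div_pos (mul_pos two_pos (Real.log_pos one_lt_two)) (pow_pos hNpos 2)
  filter_upwards [Ioo_mem_nhdsGT_of_mem (Set.mem_Ico.2 ⟨le_refl 0, hδpos⟩)] with B hB
  obtain ⟨hB0, hBδ⟩ := hB
  -- e^{-B N^2 / 2} ≥ 1/2
  have hhalf : (1:ℝ)/2 ≤ Real.exp (-B * N ^ 2 / 2) := by
    rw [show (1:ℝ)/2 = Real.exp (-Real.log 2) by
      rw [Real.exp_neg, Real.exp_log two_pos]; ring]
    apply Real.exp_le_exp.2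
    rw [hδ, lt_div_iff₀ (pow_pos hNpos 2)] at hBδ
    nlinarith [sq_nonneg N]
  -- lower bound by integral over Ioc 1 N
  have hsub : Set.Ioc (1:ℝ) N ⊆ Set.Ioi 0 := fun z hz => lt_trans one_pos hz.1
  have step1 : (∫ z in Set.Ioc (1:ℝ) N, z ^ β * Real.exp (-B * z ^ 2 / 2 + z)) ≤ Fb β B := by
    apply setIntegral_mono_set (int_fb β hβ hB0)
    · refine (ae_restrict_iff' measurableSet_Ioi).2 (Filter.Eventually.of_forall fun z hz => ?_)
      have hz0 : (0:ℝ) < z := hz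
      have h1 : 0 < z ^ β := Real.rpow_pos_of_pos hz0 β
      positivity
    · exact HasSubset.Subset.eventuallyLE hsub
  have step2 : (∫ z in Set.Ioc (1:ℝ) N, Real.exp (-B * N ^ 2 / 2) * Real.exp z) ≤
      ∫ z in Set.Ioc (1:ℝ) N, z ^ β * Real.exp (-B * z ^ 2 / 2 + z) := by
    apply setIntegral_mono_on
    · exact (continuous_const.mul Real.continuous_exp).integrableOn_Ioc
    · exact ((int_fb β hβ hB0).mono hsub le_rfl)
    · exact measurableSet_Ioc
    · intro z hz
      have hz1 : (1:ℝ) ≤ z := hz.1.le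
      have hzN : z ≤ N := hz.2
      have hz0 : (0:ℝ) < z := by linarith
      have h1 : (1:ℝ) ≤ z ^ β := Real.one_le_rpow hz1 hβ
      have hexp : Real.exp (-B * N ^ 2 / 2) * Real.exp z ≤ Real.exp (-B * z ^ 2 / 2 + z) := by
        rw [← Real.exp_add]
        apply Real.exp_le_exp.2
        nlinarith [mul_nonneg (mul_nonneg hB0.le (sub_nonneg.2 hzN)) (by linarith : (0:ℝ) ≤ N + z)]
      calc Real.exp (-B * N ^ 2 / 2) * Real.exp z ≤ Real.exp (-B * z ^ 2 / 2 + z) := hexp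
        _ ≤ z ^ β * Real.exp (-B * z ^ 2 / 2 + z) := le_mul_of_one_le_left (Real.exp_nonneg _) h1
  have step3 : (∫ z in Set.Ioc (1:ℝ) N, Real.exp (-B * N ^ 2 / 2) * Real.exp z)
      = Real.exp (-B * N ^ 2 / 2) * (Real.exp N - Real.exp 1) := by
    rw [← intervalIntegral.integral_of_le hN1.le, intervalIntegral.integral_const_mul,
      integral_exp]
  have hbig : 2 * |M| + 2 = Real.exp N - Real.exp 1 := by rw [hexpN]; ring
  have : M ≤ (1/2) * (Real.exp N - Real.exp 1) := by
    rw [← hbig]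
    have : M ≤ |M| := le_abs_self M
    linarith
  have hfinal : M ≤ Real.exp (-B * N ^ 2 / 2) * (Real.exp N - Real.exp 1) := by
    have hpos : 0 ≤ Real.exp N - Real.exp 1 := by rw [← hbig]; positivity
    calc M ≤ (1/2) * (Real.exp N - Real.exp 1) := this
      _ ≤ Real.exp (-B * N ^ 2 / 2) * (Real.exp N - Real.exp 1) :=
        mul_le_mul_of_nonneg_right (by linarith) hpos
  linarith [step1, step2, step3.symm.le.trans (step2.trans step1)]

theorem stmt12 (β ρ : ℝ) (hβ : 0 ≤ β) (hρ : 0 < ρ) :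
    ∃! B : ℝ, 0 < B ∧
      (∫ z in Set.Ioi (0 : ℝ), z ^ β * Real.exp (-B * z ^ 2 / 2 + z))
        = ρ * Real.Gamma (β + 1) := by
  set c : ℝ := ρ * Real.Gamma (β + 1) with hc
  have hcpos : 0 < c := mul_pos hρ (Real.Gamma_pos_of_pos (by linarith))
  -- find a with Fb β a > c
  have h1 : ∀ᶠ B in nhdsWithin 0 (Set.Ioi 0), c < Fb β B :=
    (bot_fb β hβ).eventually (eventually_gt_atTop c)
  obtain ⟨a, hac, ha0⟩ := (h1.and self_mem_nhdsWithin).exists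
  -- find b with Fb β b < c, b > a
  have h2 : ∀ᶠ B in atTop, Fb β B < c := (top_fb β hβ).eventually_lt_const hcpos
  obtain ⟨b, hbc, hab⟩ := (h2.and (eventually_gt_atTop a)).exists
  have ha0' : (0:ℝ) < a := ha0
  have hb0 : (0:ℝ) < b := lt_trans ha0' hab
  have hcont : ContinuousOn (Fb β) (Set.Icc a b) := fun x hx =>
    (cont_fb β hβ (lt_of_lt_of_le ha0' hx.1)).continuousWithinAt
  have hiv := intermediate_value_Icc' hab.le hcont
  have hmem : c ∈ Set.Icc (Fb β b) (Fb β a) := ⟨hbc.le, hac.le⟩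
  obtain ⟨B, hBmem, hBc⟩ := hiv hmem
  have hB0 : (0:ℝ) < B := lt_of_lt_of_le ha0' hBmem.1
  refine ⟨B, ⟨hB0, hBc⟩, ?_⟩
  rintro B' ⟨hB'0, hB'c⟩
  exact (anti_fb β hβ).injOn hB'0 hB0 (hB'c.trans hBc.symm)
end
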